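/- arXiv:2309.12062 — 3 statements merged into one kernel-verified Lean document; each statement's English description precedes it below -/
import Mathlib

section
/- Let K, λ ∈ ℝ, let a < b < c < d be real numbers with c − b < D_K, let I = [a, b] ∪ [c, d], and let f : I → ℝ be continuous with f(b) = f(c) = 0. Then the following are equivalent: (i) for all t₁ < t₂ < t₃ in I with t₃ − t₁ < D_K, f satisfies the Jensen subsolution inequality for the parameters (t₁, t₂, t₃); (ii) f extends to a continuous function on [a, d] which is a subsolution of f'' − K f = λ in the sense of Jensen on [a, d]; (iii) f restricted to [a, b] and f restricted to [c, d] are each subsolutions of f'' − K f = λ in the sense of Jensen, the one-sided derivatives f'(b⁻) and f'(c⁺) exist, and for the unique solution g of g'' − K g = λ with g(b) = g(c) = 0 one has f'(b⁻) ≤ g'(b) and f'(c⁺) ≥ g'(c). -/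
open Set MeasureTheory

/-- `x < D_K`, where `D_K := π/√(-K)` if `K < 0` and `D_K := ∞` if `K ≥ 0`. -/
def LtDK (K x : ℝ) : Prop := K < 0 → x < Real.pi / Real.sqrt (-K)

/-- `x ≤ D_K`, where `D_K := π/√(-K)` if `K < 0` and `D_K := ∞` if `K ≥ 0`. -/
def LeDK (K x : ℝ) : Prop := K < 0 → x ≤ Real.pi / Real.sqrt (-K)

/-- `g : ℝ → ℝ` is a twice differentiable solution of `g'' - K g = lam` (on all of `ℝ`). -/
def IsSol (K lam : ℝ) (g : ℝ → ℝ) : Prop :=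
  Differentiable ℝ g ∧ ∀ t, HasDerivAt (deriv g) (K * g t + lam) t

/-- `g` is a twice differentiable solution of `g'' - K g = lam` on the set `s`. -/
def IsSolOn (K lam : ℝ) (g : ℝ → ℝ) (s : Set ℝ) : Prop :=
  ∀ t ∈ s, DifferentiableAt ℝ g t ∧ HasDerivAt (deriv g) (K * g t + lam) t

/-- `f` is a subsolution of `f'' - K f = lam` in the sense of Jensen on `s`:
for all `t₁ < t₂` in `s` with `t₂ - t₁ < D_K`, the (unique) solution `g` of the ODE
with `g t₁ = f t₁` and `g t₂ = f t₂` satisfies `f ≤ g` on `[t₁, t₂]`. -/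
def JensenSub (K lam : ℝ) (f : ℝ → ℝ) (s : Set ℝ) : Prop :=
  ∀ t₁ ∈ s, ∀ t₂ ∈ s, t₁ < t₂ → LtDK K (t₂ - t₁) →
    ∀ g : ℝ → ℝ, IsSol K lam g → g t₁ = f t₁ → g t₂ = f t₂ →
      ∀ t ∈ Set.Icc t₁ t₂, f t ≤ g t

/-- `f` is a supersolution of `f'' - K f = lam` in the sense of Jensen on `s`. -/
def JensenSuper (K lam : ℝ) (f : ℝ → ℝ) (s : Set ℝ) : Prop :=
  ∀ t₁ ∈ s, ∀ t₂ ∈ s, t₁ < t₂ → LtDK K (t₂ - t₁) →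
    ∀ g : ℝ → ℝ, IsSol K lam g → g t₁ = f t₁ → g t₂ = f t₂ →
      ∀ t ∈ Set.Icc t₁ t₂, g t ≤ f t

/-- `f` is a distributional subsolution of `f'' - K f ≥ lam` on `I`. -/
def DistribSub (K lam : ℝ) (f : ℝ → ℝ) (I : Set ℝ) : Prop :=
  ∀ φ : ℝ → ℝ, ContDiff ℝ (⊤ : ℕ∞) φ → HasCompactSupport φ → tsupport φ ⊆ I →
    (∀ x, 0 ≤ φ x) →
    0 ≤ ∫ t in I, (f t * deriv (deriv φ) t - K * f t * φ t - lam * φ t)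

/-- `f` is a distributional supersolution of `f'' - K f ≤ lam` on `I`. -/
def DistribSuper (K lam : ℝ) (f : ℝ → ℝ) (I : Set ℝ) : Prop :=
  ∀ φ : ℝ → ℝ, ContDiff ℝ (⊤ : ℕ∞) φ → HasCompactSupport φ → tsupport φ ⊆ I →
    (∀ x, 0 ≤ φ x) →
    (∫ t in I, (f t * deriv (deriv φ) t - K * f t * φ t - lam * φ t)) ≤ 0

/-- `f` satisfies the Jensen subsolution inequality for the parameters `(t₁, t₂, t₃)`:
`f t₂ ≤ g t₂` for the (unique) solution `g` of `g'' - K g = lam`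
with `g t₁ = f t₁` and `g t₃ = f t₃`. -/
def JensenSubIneq (K lam : ℝ) (f : ℝ → ℝ) (t₁ t₂ t₃ : ℝ) : Prop :=
  ∀ g : ℝ → ℝ, IsSol K lam g → g t₁ = f t₁ → g t₃ = f t₃ → f t₂ ≤ g t₂

/-- `f` satisfies the Jensen supersolution inequality for the parameters `(t₁, t₂, t₃)`. -/
def JensenSuperIneq (K lam : ℝ) (f : ℝ → ℝ) (t₁ t₂ t₃ : ℝ) : Prop :=
  ∀ g : ℝ → ℝ, IsSol K lam g → g t₁ = f t₁ → g t₃ = f t₃ → g t₂ ≤ f t₂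

namespace SDAux

lemma LtDK.mono {K x y : ℝ} (h : y ≤ x) (hx : LtDK K x) : LtDK K y :=
  fun hK => lt_of_le_of_lt h (hx hK)

noncomputable def snK (K t : ℝ) : ℝ :=
  if K < 0 then Real.sin (Real.sqrt (-K) * t) / Real.sqrt (-K)
  else if K = 0 then t
  else Real.sinh (Real.sqrt K * t) / Real.sqrt K

noncomputable def csK (K t : ℝ) : ℝ :=
  if K < 0 then Real.cos (Real.sqrt (-K) * t)
  else Real.cosh (Real.sqrt K * t)

noncomputable def pK (K lam t : ℝ) : ℝ :=
  if K = 0 then lam * t ^ 2 / 2 else lam * (csK K t - 1) / K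

lemma sqrt_neg_pos {K : ℝ} (hK : K < 0) : 0 < Real.sqrt (-K) :=
  Real.sqrt_pos.2 (by linarith)

lemma sq_sqrt_neg {K : ℝ} (hK : K < 0) : Real.sqrt (-K) * Real.sqrt (-K) = -K :=
  Real.mul_self_sqrt (by linarith)

lemma sq_sqrt_pos {K : ℝ} (hK : 0 < K) : Real.sqrt K * Real.sqrt K = K :=
  Real.mul_self_sqrt (by linarith)

lemma snK_zero (K : ℝ) : snK K 0 = 0 := by
  unfold snK; split_ifs <;> simp

lemma csK_zero (K : ℝ) : csK K 0 = 1 := by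
  unfold csK; split_ifs <;> simp

lemma snK_neg (K t : ℝ) : snK K (-t) = - snK K t := by
  unfold snK; split_ifs <;> simp [mul_comm, neg_div]

lemma hasDerivAt_snK (K t : ℝ) : HasDerivAt (snK K) (csK K t) t := by
  unfold snK csK
  split_ifs with h1 h2
  · have hω := sqrt_neg_pos h1
    have h := ((Real.hasDerivAt_sin (Real.sqrt (-K) * t)).comp t
      (HasDerivAt.const_mul (Real.sqrt (-K)) (hasDerivAt_id t))).div_const (Real.sqrt (-K))
    simp only [Function.comp_def] at h
    refine h.congr_deriv (Eq.symm ?_)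
    field_simp
  · subst h2
    simpa using hasDerivAt_id' t
  · have hK : 0 < K := lt_of_le_of_ne (not_lt.1 h1) (Ne.symm h2)
    have hω := Real.sqrt_pos.2 hK
    have h := ((Real.hasDerivAt_sinh (Real.sqrt K * t)).comp t
      (HasDerivAt.const_mul (Real.sqrt K) (hasDerivAt_id t))).div_const (Real.sqrt K)
    simp only [Function.comp_def] at h
    refine h.congr_deriv (Eq.symm ?_)
    field_simp

lemma hasDerivAt_csK (K t : ℝ) : HasDerivAt (csK K) (K * snK K t) t := by
  unfold snK csK
  split_ifs with h1 h2
  · have hω := sqrt_neg_pos h1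
    have h := (Real.hasDerivAt_cos (Real.sqrt (-K) * t)).comp t
      (HasDerivAt.const_mul (Real.sqrt (-K)) (hasDerivAt_id t))
    simp only [Function.comp_def] at h
    refine h.congr_deriv (Eq.symm ?_)
    have h2 := sq_sqrt_neg h1
    field_simp
    linear_combination (Real.sin (Real.sqrt (-K) * t)) * h2
  · subst h2
    have h := (Real.hasDerivAt_cosh (Real.sqrt 0 * t)).comp t
      (HasDerivAt.const_mul (Real.sqrt 0) (hasDerivAt_id t))
    simp only [Function.comp_def] at h
    refine h.congr_deriv (Eq.symm ?_)
    simp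
  · have hK : 0 < K := lt_of_le_of_ne (not_lt.1 h1) (Ne.symm h2)
    have hω := Real.sqrt_pos.2 hK
    have h := (Real.hasDerivAt_cosh (Real.sqrt K * t)).comp t
      (HasDerivAt.const_mul (Real.sqrt K) (hasDerivAt_id t))
    simp only [Function.comp_def] at h
    refine h.congr_deriv (Eq.symm ?_)
    have h2 := sq_sqrt_pos hK
    field_simp
    linear_combination (-(Real.sinh (Real.sqrt K * t))) * h2

lemma hasDerivAt_pK (K lam t : ℝ) : HasDerivAt (pK K lam) (lam * snK K t) t := by
  unfold pK
  by_cases h2 : K = 0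
  · subst h2
    simp only [if_pos rfl]
    have h := (((hasDerivAt_pow 2 t)).const_mul lam).div_const 2
    refine h.congr_deriv (Eq.symm ?_)
    have hn : ¬ ((0:ℝ) < 0) := lt_irrefl 0
    simp [snK, hn]
    ring
  · simp only [if_neg h2]
    have h := ((((hasDerivAt_csK K t)).sub_const 1).const_mul lam).div_const K
    refine h.congr_deriv (Eq.symm ?_)
    field_simp

lemma lam_csK_eq (K lam t : ℝ) : lam * csK K t = K * pK K lam t + lam := by
  unfold pK
  by_cases h2 : K = 0
  · subst h2
    have : ¬ ((0:ℝ) < 0) := lt_irrefl 0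
    simp [csK, this]
  · simp only [if_neg h2]
    field_simp
    ring

end SDAux

namespace SDAux2
open SDAux

lemma snK_pos {K t : ℝ} (ht : 0 < t) (hD : LtDK K t) : 0 < snK K t := by
  unfold snK; split_ifs with h1 h2
  · have hω := sqrt_neg_pos h1
    apply div_pos _ hω
    apply Real.sin_pos_of_pos_of_lt_pi (by positivity)
    have h := hD h1
    calc Real.sqrt (-K) * t < Real.sqrt (-K) * (Real.pi / Real.sqrt (-K)) := by
          exact (mul_lt_mul_iff_right₀ hω).2 h
    _ = Real.pi := by field_simp
  · exact ht
  · have hK : 0 < K := lt_of_le_of_ne (not_lt.1 h1) (Ne.symm h2)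
    have hω := Real.sqrt_pos.2 hK
    exact div_pos (Real.sinh_pos_iff.2 (by positivity)) hω

lemma snK_nonneg {K t : ℝ} (ht : 0 ≤ t) (hD : LtDK K t) : 0 ≤ snK K t := by
  rcases eq_or_lt_of_le ht with h | h
  · rw [← h, snK_zero]
  · exact (snK_pos h hD).le

lemma IsSol.hasDerivAt {K lam : ℝ} {g : ℝ → ℝ} (hg : IsSol K lam g) (t : ℝ) :
    HasDerivAt g (deriv g t) t := (hg.1 t).hasDerivAt

lemma isSol_unique {K lam : ℝ} {g₁ g₂ : ℝ → ℝ} (h₁ : IsSol K lam g₁) (h₂ : IsSol K lam g₂)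
    {t₀ : ℝ} (hv : g₁ t₀ = g₂ t₀) (hd : deriv g₁ t₀ = deriv g₂ t₀) : g₁ = g₂ := by
  have main : ∀ t : ℝ, g₁ t = g₂ t := by
    intro t
    set C : NNReal := ⟨max 1 |K|, by positivity⟩ with hC
    have hlip : ∀ s : ℝ, LipschitzWith C (fun p : ℝ × ℝ => (p.2, K * p.1 + lam)) := by
      intro s
      apply LipschitzWith.of_dist_le_mul
      rintro ⟨x1, x2⟩ ⟨y1, y2⟩
      simp only [Prod.dist_eq, Real.dist_eq]
      have hCge1 : (1:ℝ) ≤ (C:ℝ) := le_max_left _ _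
      have hCgeK : |K| ≤ (C:ℝ) := le_max_right _ _
      have e : K * x1 + lam - (K * y1 + lam) = K * (x1 - y1) := by ring
      rw [e, abs_mul]
      have hmn : (0:ℝ) ≤ max |x1 - y1| |x2 - y2| :=
        le_max_of_le_left (abs_nonneg _)
      have hA : |x2 - y2| ≤ (C:ℝ) * max |x1 - y1| |x2 - y2| := by
        calc |x2 - y2| ≤ max |x1 - y1| |x2 - y2| := le_max_right _ _
        _ ≤ (C:ℝ) * max |x1 - y1| |x2 - y2| := le_mul_of_one_le_left hmn hCge1
      have hB : |K| * |x1 - y1| ≤ (C:ℝ) * max |x1 - y1| |x2 - y2| :=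
        mul_le_mul hCgeK (le_max_left _ _) (abs_nonneg _) (le_trans (abs_nonneg _) hCgeK)
      exact max_le hA hB
    have hF : ∀ s : ℝ, HasDerivAt (fun u => (g₁ u, deriv g₁ u))
        ((fun _ (p : ℝ × ℝ) => (p.2, K * p.1 + lam)) s ((g₁ s, deriv g₁ s))) s :=
      fun s => ((h₁.1 s).hasDerivAt).prodMk (h₁.2 s)
    have hG : ∀ s : ℝ, HasDerivAt (fun u => (g₂ u, deriv g₂ u))
        ((fun _ (p : ℝ × ℝ) => (p.2, K * p.1 + lam)) s ((g₂ s, deriv g₂ s))) s :=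
      fun s => ((h₂.1 s).hasDerivAt).prodMk (h₂.2 s)
    have ht₀ : t₀ ∈ Ioo (min t₀ t - 1) (max t₀ t + 1) :=
      ⟨by have := min_le_left t₀ t; linarith, by have := le_max_left t₀ t; linarith⟩
    have ht : t ∈ Ioo (min t₀ t - 1) (max t₀ t + 1) :=
      ⟨by have := min_le_right t₀ t; linarith, by have := le_max_right t₀ t; linarith⟩
    have heq := ODE_solution_unique_of_mem_Ioo
      (v := fun _ (p : ℝ × ℝ) => (p.2, K * p.1 + lam)) (s := fun _ => univ)
      (fun s _ => (hlip s).lipschitzOnWith) ht₀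
      (fun s _ => ⟨hF s, mem_univ _⟩) (fun s _ => ⟨hG s, mem_univ _⟩)
      (by rw [Prod.mk.injEq]; exact ⟨hv, hd⟩)
    have h2 := heq ht
    simp only [Prod.mk.injEq] at h2
    exact h2.1
  funext t; exact main t

noncomputable def mkSol (K lam t₀ A B : ℝ) : ℝ → ℝ :=
  fun t => pK K lam t + A * csK K (t - t₀) + B * snK K (t - t₀)

lemma hasDerivAt_mkSol (K lam t₀ A B t : ℝ) :
    HasDerivAt (mkSol K lam t₀ A B)
      (lam * snK K t + A * (K * snK K (t - t₀)) + B * csK K (t - t₀)) t := by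
  have h1 := hasDerivAt_pK K lam t
  have h2 : HasDerivAt (fun t => csK K (t - t₀)) (K * snK K (t - t₀)) t := by
    have := (hasDerivAt_csK K (t - t₀)).comp t ((hasDerivAt_id t).sub_const t₀)
    simpa [Function.comp_def] using this
  have h3 : HasDerivAt (fun t => snK K (t - t₀)) (csK K (t - t₀)) t := by
    have := (hasDerivAt_snK K (t - t₀)).comp t ((hasDerivAt_id t).sub_const t₀)
    simpa [Function.comp_def] using this
  exact (h1.add (h2.const_mul A)).add (h3.const_mul B)

lemma deriv_mkSol (K lam t₀ A B : ℝ) :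
    deriv (mkSol K lam t₀ A B)
      = fun t => lam * snK K t + A * (K * snK K (t - t₀)) + B * csK K (t - t₀) :=
  funext fun t => (hasDerivAt_mkSol K lam t₀ A B t).deriv

lemma isSol_mkSol (K lam t₀ A B : ℝ) : IsSol K lam (mkSol K lam t₀ A B) := by
  constructor
  · exact fun t => (hasDerivAt_mkSol K lam t₀ A B t).differentiableAt
  · intro t
    rw [deriv_mkSol]
    have h1 : HasDerivAt (fun t => lam * snK K t) (lam * csK K t) t :=
      (hasDerivAt_snK K t).const_mul lam
    have h2' : HasDerivAt (fun t => snK K (t - t₀)) (csK K (t - t₀)) t := by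
      have := (hasDerivAt_snK K (t - t₀)).comp t ((hasDerivAt_id t).sub_const t₀)
      simpa [Function.comp_def] using this
    have h3' : HasDerivAt (fun t => csK K (t - t₀)) (K * snK K (t - t₀)) t := by
      have := (hasDerivAt_csK K (t - t₀)).comp t ((hasDerivAt_id t).sub_const t₀)
      simpa [Function.comp_def] using this
    have h2 : HasDerivAt (fun t => A * (K * snK K (t - t₀))) (A * (K * csK K (t - t₀))) t :=
      (h2'.const_mul K).const_mul A
    have h3 : HasDerivAt (fun t => B * csK K (t - t₀)) (B * (K * snK K (t - t₀))) t :=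
      h3'.const_mul B
    have htot := (h1.add h2).add h3
    refine htot.congr_deriv (Eq.symm ?_)
    show K * mkSol K lam t₀ A B t + lam = _
    simp only [mkSol]
    linear_combination (-1 : ℝ) * lam_csK_eq K lam t

lemma mkSol_left (K lam t₀ A B : ℝ) : mkSol K lam t₀ A B t₀ = pK K lam t₀ + A := by
  simp [mkSol, snK_zero, csK_zero]

lemma deriv_mkSol_left (K lam t₀ A B : ℝ) :
    deriv (mkSol K lam t₀ A B) t₀ = lam * snK K t₀ + B := by
  rw [deriv_mkSol]; simp [snK_zero, csK_zero]

lemma isSol_eq_mkSol {K lam : ℝ} {g : ℝ → ℝ} (hg : IsSol K lam g) (t₀ : ℝ) :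
    g = mkSol K lam t₀ (g t₀ - pK K lam t₀) (deriv g t₀ - lam * snK K t₀) := by
  apply isSol_unique hg (isSol_mkSol K lam t₀ _ _) (t₀ := t₀)
  · rw [mkSol_left]; ring
  · rw [deriv_mkSol_left]; ring

lemma pK_zero (K t : ℝ) : pK K 0 t = 0 := by
  unfold pK; split_ifs <;> simp

lemma isSol_sub {K lam : ℝ} {g₁ g₂ : ℝ → ℝ} (h₁ : IsSol K lam g₁) (h₂ : IsSol K lam g₂) :
    IsSol K 0 (fun t => g₁ t - g₂ t) := by
  constructor
  · exact h₁.1.sub h₂.1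
  · intro t
    have hd : deriv (fun t => g₁ t - g₂ t) = fun t => deriv g₁ t - deriv g₂ t := by
      funext s; exact deriv_sub (h₁.1 s) (h₂.1 s)
    rw [hd]
    have := (h₁.2 t).sub (h₂.2 t)
    refine this.congr_deriv (Eq.symm ?_)
    ring

lemma isSol_add_hom {K lam : ℝ} {g h : ℝ → ℝ} (hg : IsSol K lam g) (hh : IsSol K 0 h) :
    IsSol K lam (fun t => g t + h t) := by
  constructor
  · exact hg.1.add hh.1
  · intro t
    have hd : deriv (fun t => g t + h t) = fun t => deriv g t + deriv h t := by
      funext s; exact deriv_add (hg.1 s) (hh.1 s)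
    rw [hd]
    have := (hg.2 t).add (hh.2 t)
    refine this.congr_deriv (Eq.symm ?_)
    ring

lemma isSol_hom_comb (K α β t₁ t₂ : ℝ) :
    IsSol K 0 (fun t => α * snK K (t - t₁) + β * snK K (t₂ - t)) := by
  have hA : ∀ t : ℝ, HasDerivAt (fun t => α * snK K (t - t₁)) (α * csK K (t - t₁)) t := by
    intro t
    have := (hasDerivAt_snK K (t - t₁)).comp t ((hasDerivAt_id t).sub_const t₁)
    simpa using this.const_mul α
  have hB : ∀ t : ℝ, HasDerivAt (fun t => β * snK K (t₂ - t)) (β * (-csK K (t₂ - t))) t := by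
    intro t
    have hi : HasDerivAt (fun t : ℝ => t₂ - t) (-1) t := by
      simpa using (hasDerivAt_id t).const_sub t₂
    have := (hasDerivAt_snK K (t₂ - t)).comp t hi
    have := this.const_mul β
    refine this.congr_deriv (Eq.symm ?_)
    ring
  constructor
  · exact fun t => ((hA t).add (hB t)).differentiableAt
  · intro t
    have hd : deriv (fun t => α * snK K (t - t₁) + β * snK K (t₂ - t))
        = fun t => α * csK K (t - t₁) + β * (-csK K (t₂ - t)) := by
      funext s; exact ((hA s).add (hB s)).deriv
    rw [hd]
    have hA2 : HasDerivAt (fun t => α * csK K (t - t₁)) (α * (K * snK K (t - t₁))) t := by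
      have := (hasDerivAt_csK K (t - t₁)).comp t ((hasDerivAt_id t).sub_const t₁)
      simpa using this.const_mul α
    have hB2 : HasDerivAt (fun t => β * (-csK K (t₂ - t))) (β * (K * snK K (t₂ - t))) t := by
      have hi : HasDerivAt (fun t : ℝ => t₂ - t) (-1) t := by
        simpa using (hasDerivAt_id t).const_sub t₂
      have := ((hasDerivAt_csK K (t₂ - t)).comp t hi).const_mul β
      have h2 := this.neg
      have h3 : HasDerivAt (fun t => -(β * csK K (t₂ - t))) (β * (K * snK K (t₂ - t))) t := by
        refine h2.congr_deriv (Eq.symm ?_)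
        ring
      refine h3.congr_of_eventuallyEq (Filter.Eventually.of_forall fun s => ?_)
      show β * -csK K (t₂ - s) = -(β * csK K (t₂ - s)); ring
    have := hA2.add hB2
    refine this.congr_deriv (Eq.symm ?_)
    ring

lemma hom_two_point {K : ℝ} {h : ℝ → ℝ} (hh : IsSol K 0 h) {t₁ t₂ : ℝ} (hlt : t₁ < t₂)
    (hD : LtDK K (t₂ - t₁)) (t : ℝ) :
    h t = (h t₂ * snK K (t - t₁) + h t₁ * snK K (t₂ - t)) / snK K (t₂ - t₁) := by
  have hS : 0 < snK K (t₂ - t₁) := snK_pos (by linarith) hD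
  set S := snK K (t₂ - t₁) with hSdef
  set F : ℝ → ℝ := fun t => (h t₂ / S) * snK K (t - t₁) + (h t₁ / S) * snK K (t₂ - t) with hF
  have hFsol : IsSol K 0 F := isSol_hom_comb K _ _ t₁ t₂
  have hu : IsSol K 0 (fun t => h t - F t) := isSol_sub hh hFsol
  have hu1 : h t₁ - F t₁ = 0 := by
    simp only [hF, sub_self, snK_zero, mul_zero, add_zero, zero_add, ← hSdef]
    field_simp
    ring
  have hu2 : h t₂ - F t₂ = 0 := by
    simp only [hF, sub_self, snK_zero, mul_zero, add_zero, zero_add, ← hSdef]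
    field_simp
    ring
  have hrep := isSol_eq_mkSol hu t₁
  have hd0 : deriv (fun t => h t - F t) t₁ = 0 := by
    have h2 := congrFun hrep t₂
    rw [hu2] at h2
    simp only [mkSol, pK_zero, hu1, zero_sub, zero_mul, sub_zero, neg_zero, zero_mul,
      zero_add, csK_zero, snK_zero, mul_zero, zero_mul] at h2
    have h3 : deriv (fun t => h t - F t) t₁ * S = 0 := by
      rw [← hSdef] at h2
      linarith [h2]
    exact (mul_eq_zero.mp h3).resolve_right hS.ne'
  have hz := congrFun hrep t
  simp only [mkSol, pK_zero, hu1, hd0, zero_sub, sub_zero, zero_mul, neg_zero,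
    zero_add, mul_zero, add_zero, zero_mul] at hz
  have hzz : h t = F t := by linarith [hz]
  rw [hzz, hF]
  field_simp

lemma sol_le_sol {K lam : ℝ} {g₁ g₂ : ℝ → ℝ} (h₁ : IsSol K lam g₁) (h₂ : IsSol K lam g₂)
    {t₁ t₂ : ℝ} (hlt : t₁ < t₂) (hD : LtDK K (t₂ - t₁))
    (e₁ : g₁ t₁ ≤ g₂ t₁) (e₂ : g₁ t₂ ≤ g₂ t₂) :
    ∀ t ∈ Icc t₁ t₂, g₁ t ≤ g₂ t := by
  intro t ht
  have hS : 0 < snK K (t₂ - t₁) := snK_pos (by linarith) hD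
  have h := hom_two_point (isSol_sub h₁ h₂) hlt hD t
  have hn1 : 0 ≤ snK K (t - t₁) :=
    snK_nonneg (by linarith [ht.1]) (LtDK.mono (by linarith [ht.2]) hD)
  have hn2 : 0 ≤ snK K (t₂ - t) :=
    snK_nonneg (by linarith [ht.2]) (LtDK.mono (by linarith [ht.1]) hD)
  have hnum : (g₁ t₂ - g₂ t₂) * snK K (t - t₁) + (g₁ t₁ - g₂ t₁) * snK K (t₂ - t) ≤ 0 :=
    add_nonpos (mul_nonpos_of_nonpos_of_nonneg (by linarith) hn1)
      (mul_nonpos_of_nonpos_of_nonneg (by linarith) hn2)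
  have := div_nonpos_of_nonpos_of_nonneg hnum hS.le
  rw [← h] at this
  linarith

lemma sol_eq_sol {K lam : ℝ} {g₁ g₂ : ℝ → ℝ} (h₁ : IsSol K lam g₁) (h₂ : IsSol K lam g₂)
    {t₁ t₂ : ℝ} (hlt : t₁ < t₂) (hD : LtDK K (t₂ - t₁))
    (e₁ : g₁ t₁ = g₂ t₁) (e₂ : g₁ t₂ = g₂ t₂) : g₁ = g₂ := by
  funext t
  have h := hom_two_point (isSol_sub h₁ h₂) hlt hD t
  rw [e₁, e₂] at h
  simp at h
  linarith [h]

lemma exists_sol (K lam : ℝ) {t₁ t₂ : ℝ} (hlt : t₁ < t₂) (hD : LtDK K (t₂ - t₁)) (v₁ v₂ : ℝ) :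
    ∃ g : ℝ → ℝ, IsSol K lam g ∧ g t₁ = v₁ ∧ g t₂ = v₂ := by
  have hS : 0 < snK K (t₂ - t₁) := snK_pos (by linarith) hD
  refine ⟨mkSol K lam t₁ (v₁ - pK K lam t₁)
    ((v₂ - pK K lam t₂ - (v₁ - pK K lam t₁) * csK K (t₂ - t₁)) / snK K (t₂ - t₁)),
    isSol_mkSol K lam t₁ _ _, ?_, ?_⟩
  · rw [mkSol_left]; ring
  · simp only [mkSol]
    field_simp
    ring

lemma snK_prod_lt {K x y e : ℝ} (hx : 0 < x) (hy : 0 < y) (he : 0 < e)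
    (hD : LtDK K (x + y + e)) :
    snK K x * snK K y < snK K (x + e) * snK K (y + e) := by
  unfold snK
  split_ifs with h1 h2
  · have hω := sqrt_neg_pos h1
    set ω := Real.sqrt (-K) with hωdef
    have hsum : ω * (x + y + e) < Real.pi := by
      have h := hD h1
      calc ω * (x + y + e) < ω * (Real.pi / ω) := (mul_lt_mul_iff_right₀ hω).2 h
      _ = Real.pi := by field_simp
    have id1 : ∀ A B : ℝ, Real.sin A * Real.sin B
        = (Real.cos (A - B) - Real.cos (A + B)) / 2 := by
      intro A B
      have hc1 := Real.cos_sub A B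
      have hc2 := Real.cos_add A B
      linarith
    have hcos : Real.cos (ω*(x+e) + ω*(y+e)) < Real.cos (ω*x + ω*y) := by
      have hupos : (0:ℝ) < ω*x + ω*y := by nlinarith
      have huv : ω*x + ω*y < ω*(x+e) + ω*(y+e) := by nlinarith
      have huv2 : (ω*x + ω*y) + (ω*(x+e) + ω*(y+e)) < 2 * Real.pi := by nlinarith [hsum]
      by_cases hvpi : ω*(x+e) + ω*(y+e) ≤ Real.pi
      · exact Real.cos_lt_cos_of_nonneg_of_le_pi hupos.le hvpi huv
      · have hrw : Real.cos (ω*(x+e) + ω*(y+e))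
            = Real.cos (2*Real.pi - (ω*(x+e) + ω*(y+e))) := (Real.cos_two_pi_sub _).symm
        rw [hrw]
        exact Real.cos_lt_cos_of_nonneg_of_le_pi (by linarith) (by linarith) (by linarith)
    have key : Real.sin (ω*x) * Real.sin (ω*y) < Real.sin (ω*(x+e)) * Real.sin (ω*(y+e)) := by
      rw [id1, id1]
      have hDsame : Real.cos (ω*x - ω*y) = Real.cos (ω*(x+e) - ω*(y+e)) := by
        rw [show ω*x - ω*y = ω*(x+e) - ω*(y+e) by ring]
      linarith [hcos, hDsame]
    rw [div_mul_div_comm, div_mul_div_comm]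
    exact (div_lt_div_iff_of_pos_right (by positivity)).2 key
  · nlinarith
  · have hK : 0 < K := lt_of_le_of_ne (not_lt.1 h1) (Ne.symm h2)
    have hω := Real.sqrt_pos.2 hK
    set ω := Real.sqrt K with hωdef
    have id1 : ∀ A B : ℝ, Real.sinh A * Real.sinh B
        = (Real.cosh (A + B) - Real.cosh (A - B)) / 2 := by
      intro A B
      have hc1 := Real.cosh_add A B
      have hc2 := Real.cosh_sub A B
      linarith
    have hcosh : Real.cosh (ω*x + ω*y) < Real.cosh (ω*(x+e) + ω*(y+e)) := by
      rw [Real.cosh_lt_cosh]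
      rw [abs_of_pos (by nlinarith), abs_of_pos (by nlinarith)]
      nlinarith
    have key : Real.sinh (ω*x) * Real.sinh (ω*y)
        < Real.sinh (ω*(x+e)) * Real.sinh (ω*(y+e)) := by
      rw [id1, id1]
      have hDsame : Real.cosh (ω*x - ω*y) = Real.cosh (ω*(x+e) - ω*(y+e)) := by
        rw [show ω*x - ω*y = ω*(x+e) - ω*(y+e) by ring]
      linarith [hcosh, hDsame]
    rw [div_mul_div_comm, div_mul_div_comm]
    exact (div_lt_div_iff_of_pos_right (by positivity)).2 key

lemma snK_neg_of_neg {K t : ℝ} (ht : t < 0) (hD : LtDK K (-t)) : snK K t < 0 := by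
  have := snK_pos (t := -t) (by linarith) hD
  rw [snK_neg] at this
  linarith

lemma deriv_exists_left (K lam : ℝ) {α β γ : ℝ} (hαβ : α < β) (hβγ : β < γ)
    (hD : LtDK K (γ - β)) {f : ℝ → ℝ} (hfβ : f β = 0) (hfγ : f γ = 0)
    (hsub : JensenSub K lam f (Icc α β))
    (cross : ∀ t ∈ Ico α β, LtDK K (γ - t) → JensenSubIneq K lam f t β γ) :
    ∃ db : ℝ, HasDerivWithinAt f db (Icc α β) β ∧
      ∀ g : ℝ → ℝ, IsSol K lam g → g β = 0 → g γ = 0 → db ≤ deriv g β := by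
  classical
  set δ : ℝ := if hK : K < 0 then min (β - α) (Real.pi / Real.sqrt (-K) - (γ - β))
    else (β - α) with hδ
  have hδpos : 0 < δ := by
    rw [hδ]; split_ifs with hK
    · exact lt_min (by linarith) (by have := hD hK; linarith)
    · linarith
  have hδle : δ ≤ β - α := by
    rw [hδ]; split_ifs with hK
    exacts [min_le_left _ _, le_rfl]
  have hδD : ∀ t : ℝ, β - δ < t → LtDK K (γ - t) := by
    intro t h1 hK
    rw [hδ, dif_pos hK] at h1
    have h2 := min_le_right (β - α) (Real.pi / Real.sqrt (-K) - (γ - β))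
    linarith
  have hβD : ∀ t : ℝ, β - δ < t → LtDK K (β - t) := by
    intro t h1 hK
    rw [hδ, dif_pos hK] at h1
    have h2 := min_le_right (β - α) (Real.pi / Real.sqrt (-K) - (γ - β))
    have h3 := hD hK
    linarith
  have hsnγβ : 0 < snK K (γ - β) := snK_pos (by linarith) hD
  set A : ℝ := - pK K lam β with hA
  set B : ℝ → ℝ := fun t => (f t - pK K lam t - A * csK K (t - β)) / snK K (t - β) with hB
  set G : ℝ → ℝ → ℝ := fun t => mkSol K lam β A (B t) with hG
  have hsnneg : ∀ t ∈ Ioo (β - δ) β, snK K (t - β) < 0 := by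
    intro t ht
    exact snK_neg_of_neg (by linarith [ht.2]) (by rw [show -(t-β) = β - t by ring]; exact hβD t ht.1)
  have hGt : ∀ t ∈ Ioo (β - δ) β, G t t = f t := by
    intro t ht
    have hne := (hsnneg t ht).ne
    simp only [hG, mkSol, hB]
    field_simp
    ring
  have hGβ : ∀ t, G t β = 0 := by
    intro t
    rw [show G t β = mkSol K lam β A (B t) β from rfl, mkSol_left, hA]; ring
  set B₀ : ℝ := (- pK K lam γ - A * csK K (γ - β)) / snK K (γ - β) with hB₀
  set g₀ : ℝ → ℝ := mkSol K lam β A B₀ with hg₀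
  have hg₀β : g₀ β = 0 := by rw [hg₀, mkSol_left, hA]; ring
  have hg₀γ : g₀ γ = 0 := by
    rw [hg₀]; simp only [mkSol, hB₀]
    field_simp
    ring
  -- membership helper
  have hmemb : ∀ t ∈ Ioo (β - δ) β, t ∈ Icc α β := by
    intro t ht
    exact ⟨by linarith [ht.1], (ht.2).le⟩
  -- monotonicity of B
  have hmono : MonotoneOn B (Ioo (β - δ) β) := by
    intro t ht t' ht' hle
    rcases eq_or_lt_of_le hle with h | h
    · rw [h]
    · have hfle : f t' ≤ G t t' := by
        refine hsub t (hmemb t ht) β ⟨hαβ.le, le_rfl⟩ ht.2 (hβD t ht.1) (G t)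
          (isSol_mkSol K lam β A (B t)) ?_ ?_ t' ⟨h.le, ht'.2.le⟩
        · exact hGt t ht
        · rw [hGβ t, hfβ]
      have hdiff : G t t' - G t' t' = (B t - B t') * snK K (t' - β) := by
        simp only [hG, mkSol]; ring
      have h1 : G t' t' = f t' := hGt t' ht'
      have h2 := hsnneg t' ht'
      nlinarith [hfle, hdiff, h1, h2]
  -- boundedness of B
  have hbd : ∀ t ∈ Ioo (β - δ) β, B t ≤ B₀ := by
    intro t ht
    have hγt : LtDK K (γ - t) := hδD t ht.1
    have hsnγt : 0 < snK K (γ - t) := snK_pos (by linarith [ht.2]) hγt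
    have hsnβt : 0 < snK K (β - t) := snK_pos (by linarith [ht.2]) (hβD t ht.1)
    set A' : ℝ := - pK K lam γ with hA'
    set B' : ℝ := (f t - pK K lam t - A' * csK K (t - γ)) / snK K (t - γ) with hB'
    set gh : ℝ → ℝ := mkSol K lam γ A' B' with hgh
    have hsn2 : snK K (t - γ) < 0 :=
      snK_neg_of_neg (by linarith [ht.2]) (by rw [show -(t-γ) = γ - t by ring]; exact hγt)
    have hght : gh t = f t := by
      have hne2 : snK K (t - γ) ≠ 0 := hsn2.ne
      simp only [hgh, mkSol, hB']
      field_simp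
      ring
    have hghγ : gh γ = 0 := by rw [hgh, mkSol_left, hA']; ring
    have hghβ : 0 ≤ gh β := by
      have := cross t ⟨(hmemb t ht).1, ht.2⟩ hγt gh (isSol_mkSol K lam γ A' B')
        hght (by rw [hghγ, hfγ])
      rw [hfβ] at this; exact this
    -- h₂ := gh - G t
    have hh2 : IsSol K 0 (fun s => gh s - G t s) :=
      isSol_sub (isSol_mkSol K lam γ A' B') (isSol_mkSol K lam β A (B t))
    have hh2t : gh t - G t t = 0 := by rw [hght, hGt t ht]; ring
    have hh2γ : 0 ≤ gh γ - G t γ := by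
      have htp := hom_two_point hh2 (show t < β from ht.2) (hβD t ht.1) γ
      rw [hh2t] at htp
      have hh2β : 0 ≤ gh β - G t β := by rw [hGβ t]; linarith [hghβ]
      rw [htp]
      have : 0 ≤ (gh β - G t β) * snK K (γ - t) + 0 * snK K (β - γ) := by
        rw [zero_mul, add_zero]
        exact mul_nonneg hh2β hsnγt.le
      exact div_nonneg this hsnβt.le
    have hGtγ : G t γ ≤ 0 := by rw [hghγ] at hh2γ; linarith
    have hdiff : g₀ γ - G t γ = (B₀ - B t) * snK K (γ - β) := by
      simp only [hg₀, hG, mkSol]; ring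
    nlinarith [hGtγ, hg₀γ, hdiff, hsnγβ]
  have hne : (Ioo (β - δ) β).Nonempty := ⟨β - δ/2, by constructor <;> [linarith; linarith]⟩
  have hbdd : BddAbove (B '' Ioo (β - δ) β) := by
    refine ⟨B₀, ?_⟩
    rintro _ ⟨u, hu, rfl⟩
    exact hbd u hu
  set LB : ℝ := sSup (B '' Ioo (β - δ) β) with hLB
  have hBtend : Filter.Tendsto B (nhdsWithin β (Iio β)) (nhds LB) :=
    MonotoneOn.tendsto_nhdsWithin_Ioo_left hne hmono hbdd
  have hLBle : LB ≤ B₀ := by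
    apply csSup_le (hne.image B)
    rintro _ ⟨u, hu, rfl⟩
    exact hbd u hu
  -- slope convergence
  have hIooMem : Ioo (β - δ) β ∈ nhdsWithin β (Iio β) := Ioo_mem_nhdsLT (by linarith)
  have hmono2 : nhdsWithin β (Iio β) ≤ nhdsWithin β {β}ᶜ :=
    nhdsWithin_mono β (fun x hx => (mem_compl_singleton_iff).2 (ne_of_lt hx))
  have hp : Filter.Tendsto (slope (pK K lam) β) (nhdsWithin β (Iio β)) (nhds (lam * snK K β)) :=
    ((hasDerivAt_iff_tendsto_slope).1 (hasDerivAt_pK K lam β)).mono_left hmono2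
  have hcs : HasDerivAt (fun s => csK K (s - β)) 0 β := by
    have h : ∀ u : ℝ, HasDerivAt (fun s => csK K (s - β)) (K * snK K (u - β)) u := by
      intro u
      have := (hasDerivAt_csK K (u - β)).comp u ((hasDerivAt_id u).sub_const β)
      simpa [Function.comp_def] using this
    have := h β
    simpa [snK_zero] using this
  have hsn : HasDerivAt (fun s => snK K (s - β)) 1 β := by
    have h : ∀ u : ℝ, HasDerivAt (fun s => snK K (s - β)) (csK K (u - β)) u := by
      intro u
      have := (hasDerivAt_snK K (u - β)).comp u ((hasDerivAt_id u).sub_const β)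
      simpa [Function.comp_def] using this
    have := h β
    simpa [csK_zero] using this
  have hc : Filter.Tendsto (slope (fun s => csK K (s - β)) β) (nhdsWithin β (Iio β)) (nhds 0) :=
    ((hasDerivAt_iff_tendsto_slope).1 hcs).mono_left hmono2
  have hs : Filter.Tendsto (slope (fun s => snK K (s - β)) β) (nhdsWithin β (Iio β)) (nhds 1) :=
    ((hasDerivAt_iff_tendsto_slope).1 hsn).mono_left hmono2
  have hEv : ∀ᶠ t in nhdsWithin β (Iio β),
      slope (pK K lam) β t + A * slope (fun s => csK K (s - β)) β t
      + B t * slope (fun s => snK K (s - β)) β t = slope f β t := by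
    filter_upwards [hIooMem] with t ht
    have hne : t - β ≠ 0 := sub_ne_zero.2 (ne_of_lt ht.2)
    have hft : f t = pK K lam t + A * csK K (t - β) + B t * snK K (t - β) := by
      rw [← hGt t ht]; simp only [hG, mkSol]
    have hA0 : pK K lam β + A = 0 := by rw [hA]; ring
    rw [slope_def_field, slope_def_field, slope_def_field, slope_def_field]
    rw [hfβ, hft]
    rw [sub_self, csK_zero, snK_zero]
    field_simp
    ring
  have hslope : Filter.Tendsto (slope f β) (nhdsWithin β (Iio β))
      (nhds (lam * snK K β + A * 0 + LB * 1)) :=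
    Filter.Tendsto.congr' hEv ((hp.add (hc.const_mul A)).add (hBtend.mul hs))
  refine ⟨lam * snK K β + A * 0 + LB * 1, ?_, ?_⟩
  · rw [hasDerivWithinAt_iff_tendsto_slope, Icc_sdiff_right,
      nhdsWithin_Ico_eq_nhdsLT hαβ]
    exact hslope
  · intro g hg hgβ hgγ
    have hgeq : g = g₀ :=
      sol_eq_sol hg (isSol_mkSol K lam β A B₀) hβγ hD (by rw [hgβ, hg₀β]) (by rw [hgγ, hg₀γ])
    rw [hgeq, hg₀, deriv_mkSol_left]
    linarith [hLBle]

lemma hasDerivAt_comp_neg {g : ℝ → ℝ} {d t : ℝ} (h : HasDerivAt g d (-t)) :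
    HasDerivAt (fun s => g (-s)) (-d) t := by
  have h2 := h.comp t (hasDerivAt_neg t)
  rw [show d * (-1) = -d by ring] at h2
  exact h2

lemma isSol_comp_neg {K lam : ℝ} {g : ℝ → ℝ} (hg : IsSol K lam g) :
    IsSol K lam (fun t => g (-t)) := by
  have hd : ∀ t : ℝ, HasDerivAt (fun s => g (-s)) (-(deriv g (-t))) t :=
    fun t => hasDerivAt_comp_neg ((hg.1 (-t)).hasDerivAt)
  refine ⟨fun t => (hd t).differentiableAt, ?_⟩
  intro t
  have hde : deriv (fun s => g (-s)) = fun s => -(deriv g (-s)) := funext fun s => (hd s).deriv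
  rw [hde]
  have h2 : HasDerivAt (fun s => deriv g (-s)) (-(K * g (-t) + lam)) t :=
    hasDerivAt_comp_neg (hg.2 (-t))
  have h3 := h2.neg
  refine h3.congr_deriv (Eq.symm ?_)
  ring

lemma deriv_comp_neg_eq {g : ℝ → ℝ} (hg : Differentiable ℝ g) (t : ℝ) :
    deriv (fun s => g (-s)) t = - deriv g (-t) :=
  (hasDerivAt_comp_neg ((hg (-t)).hasDerivAt)).deriv

lemma jensenSub_comp_neg {K lam : ℝ} {f : ℝ → ℝ} {u v : ℝ} (h : JensenSub K lam f (Icc u v)) :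
    JensenSub K lam (fun t => f (-t)) (Icc (-v) (-u)) := by
  intro t₁ ht₁ t₂ ht₂ hlt hDk g hg hg1 hg2 t ht
  have h' := h (-t₂) ⟨by linarith [ht₂.2], by linarith [ht₂.1]⟩ (-t₁)
    ⟨by linarith [ht₁.2], by linarith [ht₁.1]⟩ (by linarith)
    (by rw [show -t₁ - -t₂ = t₂ - t₁ by ring]; exact hDk)
    (fun s => g (-s)) (isSol_comp_neg hg) (by simpa using hg2) (by simpa using hg1)
    (-t) ⟨by linarith [ht.2], by linarith [ht.1]⟩
  simpa using h'

lemma deriv_exists_right (K lam : ℝ) {β γ ζ : ℝ} (hβγ : β < γ) (hγζ : γ < ζ)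
    (hD : LtDK K (γ - β)) {f : ℝ → ℝ} (hfβ : f β = 0) (hfγ : f γ = 0)
    (hsub : JensenSub K lam f (Icc γ ζ))
    (cross : ∀ t ∈ Ioc γ ζ, LtDK K (t - β) → JensenSubIneq K lam f β γ t) :
    ∃ dc : ℝ, HasDerivWithinAt f dc (Icc γ ζ) γ ∧
      ∀ g : ℝ → ℝ, IsSol K lam g → g β = 0 → g γ = 0 → deriv g γ ≤ dc := by
  have hcross' : ∀ t ∈ Ico (-ζ) (-γ), LtDK K (-β - t) →
      JensenSubIneq K lam (fun t => f (-t)) t (-γ) (-β) := by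
    intro t ht hDt g hg h1 h2
    have hc := cross (-t) ⟨by linarith [ht.2], by linarith [ht.1]⟩
      (by rw [show -t - β = -β - t by ring]; exact hDt)
      (fun s => g (-s)) (isSol_comp_neg hg) (by simpa using h2) (by simpa using h1)
    simpa using hc
  obtain ⟨d, hd, hb⟩ := deriv_exists_left K lam (α := -ζ) (β := -γ) (γ := -β)
    (by linarith) (by linarith) (by rw [show -β - -γ = γ - β by ring]; exact hD)
    (f := fun t => f (-t)) (by simpa using hfγ) (by simpa using hfβ)
    (jensenSub_comp_neg hsub) hcross'
  · refine ⟨-d, ?_, ?_⟩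
    · have hneg : HasDerivWithinAt (fun s : ℝ => -s) (-1) (Icc γ ζ) γ :=
        (hasDerivAt_neg γ).hasDerivWithinAt
      have hmaps : MapsTo (fun s : ℝ => -s) (Icc γ ζ) (Icc (-ζ) (-γ)) := fun x hx =>
        ⟨by show -ζ ≤ -x; linarith [hx.2], by show -x ≤ -γ; linarith [hx.1]⟩
      have h2 := HasDerivWithinAt.comp γ hd hneg hmaps
      have h3 : HasDerivWithinAt f (d * -1) (Icc γ ζ) γ :=
        h2.congr (fun y _ => by simp [Function.comp]) (by simp [Function.comp])
      rw [show d * -1 = -d by ring] at h3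
      exact h3
    · intro g hg hgβ hgγ
      have hh := hb (fun s => g (-s)) (isSol_comp_neg hg) (by simpa using hgγ)
        (by simpa using hgβ)
      rw [deriv_comp_neg_eq hg.1 (-γ)] at hh
      simp only [neg_neg] at hh
      linarith

lemma deriv_le_slope_left {f ϑ : ℝ → ℝ} {u β db dθ : ℝ} (huβ : u < β)
    (hle : ∀ s ∈ Ioo u β, f s ≤ ϑ s) (heq : f β = ϑ β)
    (hf : Filter.Tendsto (slope f β) (nhdsWithin β (Iio β)) (nhds db))
    (hϑ : HasDerivAt ϑ dθ β) : dθ ≤ db := by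
  have hϑt : Filter.Tendsto (slope ϑ β) (nhdsWithin β (Iio β)) (nhds dθ) :=
    ((hasDerivAt_iff_tendsto_slope).1 hϑ).mono_left
      (nhdsWithin_mono β fun x hx => (mem_compl_singleton_iff).2 (ne_of_lt hx))
  have hev : ∀ᶠ s in nhdsWithin β (Iio β), slope ϑ β s ≤ slope f β s := by
    filter_upwards [Ioo_mem_nhdsLT huβ] with s hs
    have hd : s - β < 0 := sub_neg.2 hs.2
    have h2 : f s - f β ≤ ϑ s - ϑ β := by
      have := hle s hs; rw [heq]; linarith
    rw [slope_def_field, slope_def_field]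
    have h4 := mul_le_mul_of_nonpos_right h2 (inv_nonpos.2 hd.le)
    simpa [div_eq_mul_inv] using h4
  exact le_of_tendsto_of_tendsto hϑt hf hev

lemma slope_le_deriv_right {f ϑ : ℝ → ℝ} {γ v dc dθ : ℝ} (hγv : γ < v)
    (hle : ∀ s ∈ Ioo γ v, f s ≤ ϑ s) (heq : f γ = ϑ γ)
    (hf : Filter.Tendsto (slope f γ) (nhdsWithin γ (Ioi γ)) (nhds dc))
    (hϑ : HasDerivAt ϑ dθ γ) : dc ≤ dθ := by
  have hϑt : Filter.Tendsto (slope ϑ γ) (nhdsWithin γ (Ioi γ)) (nhds dθ) :=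
    ((hasDerivAt_iff_tendsto_slope).1 hϑ).mono_left
      (nhdsWithin_mono γ fun x hx => (mem_compl_singleton_iff).2 (ne_of_gt hx))
  have hev : ∀ᶠ s in nhdsWithin γ (Ioi γ), slope f γ s ≤ slope ϑ γ s := by
    filter_upwards [Ioo_mem_nhdsGT hγv] with s hs
    have hd : (0:ℝ) < s - γ := sub_pos.2 hs.1
    have h2 : f s - f γ ≤ ϑ s - ϑ γ := by
      have := hle s hs; rw [heq]; linarith
    rw [slope_def_field, slope_def_field]
    have h4 := mul_le_mul_of_nonneg_right h2 (inv_nonneg.2 hd.le)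
    simpa [div_eq_mul_inv] using h4
  exact le_of_tendsto_of_tendsto hf hϑt hev

lemma jensenSub_le_sol {K lam : ℝ} {f g : ℝ → ℝ} {s : Set ℝ} (hsub : JensenSub K lam f s)
    {t₁ t₂ : ℝ} (h1 : t₁ ∈ s) (h2 : t₂ ∈ s) (hlt : t₁ < t₂) (hD : LtDK K (t₂ - t₁))
    (hg : IsSol K lam g) (e1 : f t₁ ≤ g t₁) (e2 : f t₂ ≤ g t₂) :
    ∀ t ∈ Icc t₁ t₂, f t ≤ g t := by
  obtain ⟨h, hhsol, hh1, hh2⟩ := exists_sol K lam hlt hD (f t₁) (f t₂)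
  intro t ht
  have hfh := hsub t₁ h1 t₂ h2 hlt hD h hhsol hh1 hh2 t ht
  have hhg := sol_le_sol hhsol hg hlt hD (by rw [hh1]; exact e1) (by rw [hh2]; exact e2) t ht
  linarith

lemma hom_from_point {K : ℝ} {h : ℝ → ℝ} (hh : IsSol K 0 h) {t₀ : ℝ} (h0 : h t₀ = 0) (t : ℝ) :
    h t = deriv h t₀ * snK K (t - t₀) := by
  have h2 := congrFun (isSol_eq_mkSol hh t₀) t
  rw [h2]
  simp [mkSol, pK_zero, h0]

lemma corner_b {K lam a b c : ℝ} (hab : a < b) (hbc : b < c) {f g₀ : ℝ → ℝ}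
    (hg₀ : IsSol K lam g₀) (hg₀b : g₀ b = 0) (hg₀c : g₀ c = 0)
    (hsub : JensenSub K lam f (Icc a b)) (hfb : f b = 0)
    {db : ℝ} (hdb : HasDerivWithinAt f db (Icc a b) b) (hdble : db ≤ deriv g₀ b)
    {t₁ t₂ : ℝ} (ht₁ : t₁ ∈ Ico a b) (ht₂ : t₂ ∈ Ioc b c) (hD12 : LtDK K (t₂ - t₁))
    {g : ℝ → ℝ} (hg : IsSol K lam g) (hgt₁ : g t₁ = f t₁) (hgt₂ : g t₂ = g₀ t₂) :
    0 ≤ g b := by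
  by_contra hneg
  push_neg at hneg
  have hbt₁ : t₁ < b := ht₁.2
  have hbt₂ : b < t₂ := ht₂.1
  have hDb : LtDK K (b - t₁) := LtDK.mono (by linarith) hD12
  have hDbt : LtDK K (t₂ - b) := LtDK.mono (by linarith) hD12
  obtain ⟨ϑ, hϑsol, hϑ1, hϑb⟩ := exists_sol K lam hbt₁ hDb (f t₁) 0
  have hfϑ : ∀ s ∈ Icc t₁ b, f s ≤ ϑ s :=
    hsub t₁ (Ico_subset_Icc_self ht₁) b ⟨hab.le, le_rfl⟩ hbt₁ hDb ϑ hϑsol hϑ1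
      (by rw [hϑb, hfb])
  have hslopef : Filter.Tendsto (slope f b) (nhdsWithin b (Iio b)) (nhds db) := by
    have h := (hasDerivWithinAt_iff_tendsto_slope).1 hdb
    rwa [Icc_sdiff_right, nhdsWithin_Ico_eq_nhdsLT hab] at h
  have hθle : deriv ϑ b ≤ db :=
    deriv_le_slope_left hbt₁ (fun s hs => hfϑ s ⟨hs.1.le, hs.2.le⟩) (by rw [hfb, hϑb])
      hslopef ((hϑsol.1 b).hasDerivAt)
  have hμ : IsSol K 0 (fun s => ϑ s - g₀ s) := isSol_sub hϑsol hg₀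
  have hμb : ϑ b - g₀ b = 0 := by rw [hϑb, hg₀b]; ring
  have hμd : deriv (fun s => ϑ s - g₀ s) b ≤ 0 := by
    rw [deriv_fun_sub (hϑsol.1 b) (hg₀.1 b)]; linarith
  have hμt₂ : ϑ t₂ - g₀ t₂ ≤ 0 := by
    rw [hom_from_point hμ hμb t₂]
    exact mul_nonpos_of_nonpos_of_nonneg hμd (snK_nonneg (by linarith) hDbt)
  have hκ : IsSol K 0 (fun s => ϑ s - g s) := isSol_sub hϑsol hg
  have hκt₁ : ϑ t₁ - g t₁ = 0 := by rw [hϑ1, hgt₁]; ring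
  have hκb : 0 < ϑ b - g b := by rw [hϑb]; linarith
  have hκt₂ : 0 < ϑ t₂ - g t₂ := by
    have h2 := hom_two_point hκ hbt₁ hDb t₂
    rw [hκt₁] at h2
    simp only [zero_mul, add_zero] at h2
    rw [h2]
    apply div_pos
    · exact mul_pos hκb (snK_pos (by linarith) hD12)
    · exact snK_pos (by linarith) hDb
  rw [hgt₂] at hκt₂
  linarith

lemma corner_c {K lam b c d : ℝ} (hbc : b < c) (hcd : c < d) {f g₀ : ℝ → ℝ}
    (hg₀ : IsSol K lam g₀) (hg₀b : g₀ b = 0) (hg₀c : g₀ c = 0)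
    (hsub : JensenSub K lam f (Icc c d)) (hfc : f c = 0)
    {dc : ℝ} (hdc : HasDerivWithinAt f dc (Icc c d) c) (hdcge : deriv g₀ c ≤ dc)
    {t₁ t₂ : ℝ} (ht₁ : t₁ ∈ Ico b c) (ht₂ : t₂ ∈ Ioc c d) (hD12 : LtDK K (t₂ - t₁))
    {g : ℝ → ℝ} (hg : IsSol K lam g) (hgt₁ : g t₁ = g₀ t₁) (hgt₂ : g t₂ = f t₂) :
    0 ≤ g c := by
  by_contra hneg
  push_neg at hneg
  have hct₂ : c < t₂ := ht₂.1
  have ht₁c : t₁ < c := ht₁.2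
  have hDc : LtDK K (t₂ - c) := LtDK.mono (by linarith) hD12
  have hDct : LtDK K (c - t₁) := LtDK.mono (by linarith) hD12
  obtain ⟨ϑ, hϑsol, hϑc, hϑ2⟩ := exists_sol K lam hct₂ hDc 0 (f t₂)
  have hfϑ : ∀ s ∈ Icc c t₂, f s ≤ ϑ s :=
    hsub c ⟨le_rfl, hcd.le⟩ t₂ (Ioc_subset_Icc_self ht₂) hct₂ hDc ϑ hϑsol
      (by rw [hϑc, hfc]) hϑ2
  have hslopef : Filter.Tendsto (slope f c) (nhdsWithin c (Ioi c)) (nhds dc) := by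
    have h := (hasDerivWithinAt_iff_tendsto_slope).1 hdc
    rwa [Icc_diff_left, nhdsWithin_Ioc_eq_nhdsGT hcd] at h
  have hθge : dc ≤ deriv ϑ c :=
    slope_le_deriv_right hct₂ (fun s hs => hfϑ s ⟨hs.1.le, hs.2.le⟩) (by rw [hfc, hϑc])
      hslopef ((hϑsol.1 c).hasDerivAt)
  have hν : IsSol K 0 (fun s => ϑ s - g₀ s) := isSol_sub hϑsol hg₀
  have hνc : ϑ c - g₀ c = 0 := by rw [hϑc, hg₀c]; ring
  have hνd : 0 ≤ deriv (fun s => ϑ s - g₀ s) c := by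
    rw [deriv_fun_sub (hϑsol.1 c) (hg₀.1 c)]; linarith
  have hνt₁ : ϑ t₁ - g₀ t₁ ≤ 0 := by
    rw [hom_from_point hν hνc t₁]
    apply mul_nonpos_of_nonneg_of_nonpos hνd
    have := snK_neg_of_neg (t := t₁ - c) (by linarith)
      (by rw [show -(t₁ - c) = c - t₁ by ring]; exact hDct)
    linarith
  have hκ : IsSol K 0 (fun s => ϑ s - g s) := isSol_sub hϑsol hg
  have hκt₂ : ϑ t₂ - g t₂ = 0 := by rw [hϑ2, hgt₂]; ring
  have hκc : 0 < ϑ c - g c := by rw [hϑc]; linarith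
  have hκt₁ : 0 < ϑ t₁ - g t₁ := by
    have h2 := hom_two_point hκ hct₂ hDc t₁
    rw [hκt₂] at h2
    simp only [zero_mul, zero_add] at h2
    rw [h2]
    apply div_pos
    · exact mul_pos hκc (snK_pos (by linarith) hD12)
    · exact snK_pos (by linarith) hDc
  rw [hgt₁] at hκt₁
  linarith

set_option maxHeartbeats 2000000 in
lemma double_corner {K lam a b c d : ℝ} (hab : a < b) (hbc : b < c) (hcd : c < d)
    (hD : LtDK K (c - b)) {f g₀ : ℝ → ℝ}
    (hg₀ : IsSol K lam g₀) (hg₀b : g₀ b = 0) (hg₀c : g₀ c = 0)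
    (hsubab : JensenSub K lam f (Icc a b)) (hsubcd : JensenSub K lam f (Icc c d))
    (hfb : f b = 0) (hfc : f c = 0)
    {db dc : ℝ} (hdb : HasDerivWithinAt f db (Icc a b) b)
    (hdc : HasDerivWithinAt f dc (Icc c d) c)
    (hdble : db ≤ deriv g₀ b) (hdcge : deriv g₀ c ≤ dc)
    {t₁ t₂ : ℝ} (ht₁ : t₁ ∈ Ico a b) (ht₂ : t₂ ∈ Ioc c d) (hD12 : LtDK K (t₂ - t₁))
    {g : ℝ → ℝ} (hg : IsSol K lam g) (hgt₁ : g t₁ = f t₁) (hgt₂ : g t₂ = f t₂) :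
    0 ≤ g b ∧ 0 ≤ g c := by
  have hbt₁ : t₁ < b := ht₁.2
  have hct₂ : c < t₂ := ht₂.1
  have hDct₁ : LtDK K (c - t₁) := LtDK.mono (by linarith) hD12
  have hDt₂b : LtDK K (t₂ - b) := LtDK.mono (by linarith) hD12
  have hDbt₁ : LtDK K (b - t₁) := LtDK.mono (by linarith) hD12
  have hDt₂c : LtDK K (t₂ - c) := LtDK.mono (by linarith) hD12
  have claim2 : 0 ≤ g c → 0 ≤ g b := by
    intro hc
    obtain ⟨gg, hggsol, hgg1, hggc⟩ := exists_sol K lam (show t₁ < c by linarith) hDct₁ (f t₁) 0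
    have hggb : 0 ≤ gg b :=
      corner_b hab hbc hg₀ hg₀b hg₀c hsubab hfb hdb hdble ht₁ ⟨hbc, le_rfl⟩ hDct₁
        hggsol hgg1 (by rw [hggc, hg₀c])
    have hle := sol_le_sol hggsol hg (show t₁ < c by linarith) hDct₁
      (by rw [hgg1, hgt₁]) (by rw [hggc]; exact hc) b ⟨by linarith, by linarith⟩
    linarith
  have claim1 : 0 ≤ g b → 0 ≤ g c := by
    intro hb
    obtain ⟨gg, hggsol, hggb, hgg2⟩ := exists_sol K lam (show b < t₂ by linarith) hDt₂b 0 (f t₂)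
    have hggc : 0 ≤ gg c :=
      corner_c hbc hcd hg₀ hg₀b hg₀c hsubcd hfc hdc hdcge ⟨le_rfl, hbc⟩ ht₂ hDt₂b
        hggsol (by rw [hggb, hg₀b]) hgg2
    have hle := sol_le_sol hggsol hg (show b < t₂ by linarith) hDt₂b
      (by rw [hggb]; exact hb) (by rw [hgg2, hgt₂]) c ⟨by linarith, by linarith⟩
    linarith
  by_cases hb : 0 ≤ g b
  · exact ⟨hb, claim1 hb⟩
  by_cases hc : 0 ≤ g c
  · exact ⟨claim2 hc, hc⟩
  exfalso
  push_neg at hb hc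
  -- star argument
  obtain ⟨ϑ, hϑsol, hϑ1, hϑb⟩ := exists_sol K lam hbt₁ hDbt₁ (f t₁) 0
  obtain ⟨θ, hθsol, hθc, hθ2⟩ := exists_sol K lam hct₂ hDt₂c 0 (f t₂)
  -- derivative bounds
  have hfϑ : ∀ s ∈ Icc t₁ b, f s ≤ ϑ s :=
    hsubab t₁ (Ico_subset_Icc_self ht₁) b ⟨hab.le, le_rfl⟩ hbt₁ hDbt₁ ϑ hϑsol hϑ1
      (by rw [hϑb, hfb])
  have hslopefb : Filter.Tendsto (slope f b) (nhdsWithin b (Iio b)) (nhds db) := by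
    have h := (hasDerivWithinAt_iff_tendsto_slope).1 hdb
    rwa [Icc_sdiff_right, nhdsWithin_Ico_eq_nhdsLT hab] at h
  have hθble : deriv ϑ b ≤ db :=
    deriv_le_slope_left hbt₁ (fun s hs => hfϑ s ⟨hs.1.le, hs.2.le⟩) (by rw [hfb, hϑb])
      hslopefb ((hϑsol.1 b).hasDerivAt)
  have hfθ : ∀ s ∈ Icc c t₂, f s ≤ θ s :=
    hsubcd c ⟨le_rfl, hcd.le⟩ t₂ (Ioc_subset_Icc_self ht₂) hct₂ hDt₂c θ hθsol
      (by rw [hθc, hfc]) hθ2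
  have hslopefc : Filter.Tendsto (slope f c) (nhdsWithin c (Ioi c)) (nhds dc) := by
    have h := (hasDerivWithinAt_iff_tendsto_slope).1 hdc
    rwa [Icc_diff_left, nhdsWithin_Ioc_eq_nhdsGT hcd] at h
  have hθcge : dc ≤ deriv θ c :=
    slope_le_deriv_right hct₂ (fun s hs => hfθ s ⟨hs.1.le, hs.2.le⟩) (by rw [hfc, hθc])
      hslopefc ((hθsol.1 c).hasDerivAt)
  -- μ := ϑ - g₀ at c
  have hμ : IsSol K 0 (fun s => ϑ s - g₀ s) := isSol_sub hϑsol hg₀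
  have hμb : ϑ b - g₀ b = 0 := by rw [hϑb, hg₀b]; ring
  have hμd : deriv (fun s => ϑ s - g₀ s) b ≤ 0 := by
    rw [deriv_fun_sub (hϑsol.1 b) (hg₀.1 b)]; linarith
  have hϑc : ϑ c ≤ 0 := by
    have h2 := hom_from_point hμ hμb c
    have h3 : ϑ c - g₀ c ≤ 0 := by
      rw [h2]
      exact mul_nonpos_of_nonpos_of_nonneg hμd (snK_nonneg (by linarith) hD)
    rw [hg₀c] at h3; linarith
  -- κ := ϑ - g via two-point on (t₁, b), evaluated at c
  have hκ : IsSol K 0 (fun s => ϑ s - g s) := isSol_sub hϑsol hg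
  have hκt₁ : ϑ t₁ - g t₁ = 0 := by rw [hϑ1, hgt₁]; ring
  have hκc : ϑ c - g c = (ϑ b - g b) * snK K (c - t₁) / snK K (b - t₁) := by
    have h2 := hom_two_point hκ hbt₁ hDbt₁ c
    rw [hκt₁] at h2
    simpa using h2
  -- star 1 : (-g c) * snK (b - t₁) ≥ (-g b) * snK (c - t₁)
  have hsnbt₁ : 0 < snK K (b - t₁) := snK_pos (by linarith) hDbt₁
  have hsnct₁ : 0 < snK K (c - t₁) := snK_pos (by linarith) hDct₁
  have hsnt₂c : 0 < snK K (t₂ - c) := snK_pos (by linarith) hDt₂c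
  have hsnt₂b : 0 < snK K (t₂ - b) := snK_pos (by linarith) hDt₂b
  have hstar1 : (-(g b)) * snK K (c - t₁) ≤ (-(g c)) * snK K (b - t₁) := by
    have h4 : ϑ c = g c + (ϑ b - g b) * snK K (c - t₁) / snK K (b - t₁) := by
      linarith [hκc]
    rw [hϑb] at h4
    have h5 : g c + (0 - g b) * snK K (c - t₁) / snK K (b - t₁) ≤ 0 := by
      rw [← h4]; exact hϑc
    have h6 := mul_le_mul_of_nonneg_right h5 hsnbt₁.le
    rw [add_mul, div_mul_cancel₀] at h6
    · nlinarith [h6, hsnbt₁, hc]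
    · exact hsnbt₁.ne'
  -- ν := θ - g₀ at b
  have hν : IsSol K 0 (fun s => θ s - g₀ s) := isSol_sub hθsol hg₀
  have hνc : θ c - g₀ c = 0 := by rw [hθc, hg₀c]; ring
  have hνd : 0 ≤ deriv (fun s => θ s - g₀ s) c := by
    rw [deriv_fun_sub (hθsol.1 c) (hg₀.1 c)]; linarith
  have hθb : θ b ≤ 0 := by
    have h2 := hom_from_point hν hνc b
    have hsnbc : snK K (b - c) < 0 :=
      snK_neg_of_neg (by linarith) (by rw [show -(b - c) = c - b by ring]; exact hD)
    have h3 : θ b - g₀ b ≤ 0 := by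
      rw [h2]
      exact mul_nonpos_of_nonneg_of_nonpos hνd hsnbc.le
    rw [hg₀b] at h3; linarith
  -- κ₂ := θ - g via two-point on (c, t₂), evaluated at b
  have hκ₂ : IsSol K 0 (fun s => θ s - g s) := isSol_sub hθsol hg
  have hκ₂t₂ : θ t₂ - g t₂ = 0 := by rw [hθ2, hgt₂]; ring
  have hκ₂b : θ b - g b = (θ c - g c) * snK K (t₂ - b) / snK K (t₂ - c) := by
    have h2 := hom_two_point hκ₂ hct₂ hDt₂c b
    rw [hκ₂t₂] at h2
    simpa using h2
  have hstar2 : (-(g c)) * snK K (t₂ - b) ≤ (-(g b)) * snK K (t₂ - c) := by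
    have h4 : θ b = g b + (θ c - g c) * snK K (t₂ - b) / snK K (t₂ - c) := by
      linarith [hκ₂b]
    rw [hθc] at h4
    have h5 : g b + (0 - g c) * snK K (t₂ - b) / snK K (t₂ - c) ≤ 0 := by
      rw [← h4]; exact hθb
    have h6 := mul_le_mul_of_nonneg_right h5 hsnt₂c.le
    rw [add_mul, div_mul_cancel₀] at h6
    · nlinarith [h6, hsnt₂c, hb]
    · exact hsnt₂c.ne'
  -- product inequality contradiction
  have hprod := snK_prod_lt (K := K) (x := b - t₁) (y := t₂ - c) (e := c - b)
    (by linarith) (by linarith) (by linarith)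
    (by rw [show b - t₁ + (t₂ - c) + (c - b) = t₂ - t₁ by ring]; exact hD12)
  rw [show b - t₁ + (c - b) = c - t₁ by ring, show t₂ - c + (c - b) = t₂ - b by ring] at hprod
  have hgb' : 0 < -(g b) := by linarith
  have hgc' : 0 < -(g c) := by linarith
  have hm := mul_le_mul hstar1 hstar2 (mul_nonneg hgc'.le hsnt₂b.le)
    (mul_nonneg hgc'.le hsnbt₁.le)
  have hp := mul_lt_mul_of_pos_left hprod (mul_pos hgb' hgc')
  ring_nf at hm hp
  linarith

end SDAux2

open SDAux SDAux2

/-- split domain, subsolutions: for a continuous `f` on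
`I = [a, b] ∪ [c, d]` with `f b = f c = 0` and `c - b < D_K`, the following are equivalent:
(i) `f` satisfies all Jensen subsolution inequalities with parameters in `I`;
(ii) `f` extends to a Jensen subsolution on `[a, d]`;
(iii) `f` is a Jensen subsolution on both `[a, b]` and `[c, d]`, the one-sided derivatives
`f'(b⁻)`, `f'(c⁺)` exist and satisfy `f'(b⁻) ≤ g'(b)`, `f'(c⁺) ≥ g'(c)` for the unique
solution `g` of the ODE with `g b = g c = 0`. -/
theorem split_domain_sub_equivalences
    (K lam a b c d : ℝ) (hab : a < b) (hbc : b < c) (hcd : c < d)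
    (hD : LtDK K (c - b))
    (f : ℝ → ℝ) (hf : ContinuousOn f (Set.Icc a b ∪ Set.Icc c d))
    (hb0 : f b = 0) (hc0 : f c = 0) :
    ((∀ t₁ ∈ Set.Icc a b ∪ Set.Icc c d, ∀ t₂ ∈ Set.Icc a b ∪ Set.Icc c d,
        ∀ t₃ ∈ Set.Icc a b ∪ Set.Icc c d,
        t₁ < t₂ → t₂ < t₃ → LtDK K (t₃ - t₁) → JensenSubIneq K lam f t₁ t₂ t₃) ↔
      (∃ F : ℝ → ℝ, ContinuousOn F (Set.Icc a d) ∧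
        (∀ t ∈ Set.Icc a b ∪ Set.Icc c d, F t = f t) ∧
        JensenSub K lam F (Set.Icc a d))) ∧
    ((∀ t₁ ∈ Set.Icc a b ∪ Set.Icc c d, ∀ t₂ ∈ Set.Icc a b ∪ Set.Icc c d,
        ∀ t₃ ∈ Set.Icc a b ∪ Set.Icc c d,
        t₁ < t₂ → t₂ < t₃ → LtDK K (t₃ - t₁) → JensenSubIneq K lam f t₁ t₂ t₃) ↔
      (JensenSub K lam f (Set.Icc a b) ∧ JensenSub K lam f (Set.Icc c d) ∧
        ∃ db dc : ℝ,
          HasDerivWithinAt f db (Set.Icc a b) b ∧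
          HasDerivWithinAt f dc (Set.Icc c d) c ∧
          ∀ g : ℝ → ℝ, IsSol K lam g → g b = 0 → g c = 0 →
            db ≤ deriv g b ∧ deriv g c ≤ dc)) := by
  have h21 : (∃ F : ℝ → ℝ, ContinuousOn F (Set.Icc a d) ∧
        (∀ t ∈ Set.Icc a b ∪ Set.Icc c d, F t = f t) ∧
        JensenSub K lam F (Set.Icc a d)) →
      (∀ t₁ ∈ Set.Icc a b ∪ Set.Icc c d, ∀ t₂ ∈ Set.Icc a b ∪ Set.Icc c d,
        ∀ t₃ ∈ Set.Icc a b ∪ Set.Icc c d,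
        t₁ < t₂ → t₂ < t₃ → LtDK K (t₃ - t₁) → JensenSubIneq K lam f t₁ t₂ t₃) := by
    rintro ⟨F, _, hFeq, hFsub⟩ t₁ ht₁ t₂ ht₂ t₃ ht₃ h12 h23 hD13 g hg hg1 hg3
    have hI : ∀ t ∈ Set.Icc a b ∪ Set.Icc c d, t ∈ Set.Icc a d := by
      rintro t (h | h)
      · exact ⟨h.1, by linarith [h.2]⟩
      · exact ⟨by linarith [h.1], h.2⟩
    have h := hFsub t₁ (hI _ ht₁) t₃ (hI _ ht₃) (lt_trans h12 h23) hD13 g hg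
      (by rw [hFeq t₁ ht₁]; exact hg1) (by rw [hFeq t₃ ht₃]; exact hg3)
      t₂ ⟨h12.le, h23.le⟩
    rwa [hFeq t₂ ht₂] at h
  have h13 : (∀ t₁ ∈ Set.Icc a b ∪ Set.Icc c d, ∀ t₂ ∈ Set.Icc a b ∪ Set.Icc c d,
        ∀ t₃ ∈ Set.Icc a b ∪ Set.Icc c d,
        t₁ < t₂ → t₂ < t₃ → LtDK K (t₃ - t₁) → JensenSubIneq K lam f t₁ t₂ t₃) →
      (JensenSub K lam f (Set.Icc a b) ∧ JensenSub K lam f (Set.Icc c d) ∧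
        ∃ db dc : ℝ,
          HasDerivWithinAt f db (Set.Icc a b) b ∧
          HasDerivWithinAt f dc (Set.Icc c d) c ∧
          ∀ g : ℝ → ℝ, IsSol K lam g → g b = 0 → g c = 0 →
            db ≤ deriv g b ∧ deriv g c ≤ dc) := by
    intro hP
    have hsub_ab : JensenSub K lam f (Set.Icc a b) := by
      intro t₁ ht₁ t₂ ht₂ hlt hDt g hg hg1 hg2 t ht
      rcases eq_or_lt_of_le ht.1 with h1 | h1
      · rw [← h1, ← hg1]
      rcases eq_or_lt_of_le ht.2 with h2 | h2
      · rw [h2, ← hg2]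
      exact hP t₁ (Or.inl ht₁) t (Or.inl ⟨le_trans ht₁.1 ht.1, le_trans ht.2 ht₂.2⟩)
        t₂ (Or.inl ht₂) h1 h2 hDt g hg hg1 hg2
    have hsub_cd : JensenSub K lam f (Set.Icc c d) := by
      intro t₁ ht₁ t₂ ht₂ hlt hDt g hg hg1 hg2 t ht
      rcases eq_or_lt_of_le ht.1 with h1 | h1
      · rw [← h1, ← hg1]
      rcases eq_or_lt_of_le ht.2 with h2 | h2
      · rw [h2, ← hg2]
      exact hP t₁ (Or.inr ht₁) t (Or.inr ⟨le_trans ht₁.1 ht.1, le_trans ht.2 ht₂.2⟩)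
        t₂ (Or.inr ht₂) h1 h2 hDt g hg hg1 hg2
    obtain ⟨db, hdb, hdbb⟩ := deriv_exists_left K lam hab hbc hD hb0 hc0 hsub_ab
      (fun t ht hDt => hP t (Or.inl (Set.Ico_subset_Icc_self ht)) b (Or.inl ⟨hab.le, le_rfl⟩)
        c (Or.inr ⟨le_rfl, hcd.le⟩) ht.2 hbc hDt)
    obtain ⟨dc, hdc, hdcc⟩ := deriv_exists_right K lam hbc hcd hD hb0 hc0 hsub_cd
      (fun t ht hDt => hP b (Or.inl ⟨hab.le, le_rfl⟩) c (Or.inr ⟨le_rfl, hcd.le⟩)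
        t (Or.inr (Set.Ioc_subset_Icc_self ht)) hbc ht.1 hDt)
    exact ⟨hsub_ab, hsub_cd, db, dc, hdb, hdc,
      fun g hg h1 h2 => ⟨hdbb g hg h1 h2, hdcc g hg h1 h2⟩⟩
  have h32 : (JensenSub K lam f (Set.Icc a b) ∧ JensenSub K lam f (Set.Icc c d) ∧
        ∃ db dc : ℝ,
          HasDerivWithinAt f db (Set.Icc a b) b ∧
          HasDerivWithinAt f dc (Set.Icc c d) c ∧
          ∀ g : ℝ → ℝ, IsSol K lam g → g b = 0 → g c = 0 →
            db ≤ deriv g b ∧ deriv g c ≤ dc) →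
      (∃ F : ℝ → ℝ, ContinuousOn F (Set.Icc a d) ∧
        (∀ t ∈ Set.Icc a b ∪ Set.Icc c d, F t = f t) ∧
        JensenSub K lam F (Set.Icc a d)) := by
    rintro ⟨hsub_ab, hsub_cd, db, dc, hdb, hdc, hbound⟩
    obtain ⟨g₀, hg₀sol, hg₀b, hg₀c⟩ := exists_sol K lam hbc hD 0 0
    obtain ⟨hdble, hdcge⟩ := hbound g₀ hg₀sol hg₀b hg₀c
    set F : ℝ → ℝ := fun t => if b < t ∧ t < c then g₀ t else f t with hFdef
    have hFf : ∀ t ∈ Set.Icc a b ∪ Set.Icc c d, F t = f t := by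
      rintro t (h | h)
      · have hcond : ¬(b < t ∧ t < c) := fun hco => absurd h.2 (not_le.2 hco.1)
        simp [hFdef, hcond]
      · have hcond : ¬(b < t ∧ t < c) := fun hco => absurd h.1 (not_le.2 hco.2)
        simp [hFdef, hcond]
    have hFg₀ : ∀ t ∈ Set.Icc b c, F t = g₀ t := by
      intro t h
      rcases eq_or_lt_of_le h.1 with h1 | h1
      · rw [← h1, hFf b (Or.inl ⟨hab.le, le_rfl⟩), hb0, hg₀b]
      rcases eq_or_lt_of_le h.2 with h2 | h2
      · rw [h2, hFf c (Or.inr ⟨le_rfl, hcd.le⟩), hc0, hg₀c]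
      · have hcond : b < t ∧ t < c := ⟨h1, h2⟩
        simp [hFdef, hcond]
    refine ⟨F, ?_, hFf, ?_⟩
    · have h1 : ContinuousOn F (Set.Icc a b) :=
        ContinuousOn.congr (hf.mono Set.subset_union_left) (fun t ht => hFf t (Or.inl ht))
      have h2 : ContinuousOn F (Set.Icc b c) :=
        ContinuousOn.congr (hg₀sol.1.continuous.continuousOn) hFg₀
      have h3 : ContinuousOn F (Set.Icc c d) :=
        ContinuousOn.congr (hf.mono Set.subset_union_right) (fun t ht => hFf t (Or.inr ht))
      have hcw : ∀ (s : Set ℝ), IsClosed s → ContinuousOn F s →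
          ∀ x : ℝ, ContinuousWithinAt F s x := by
        intro s hs hcont x
        by_cases hx : x ∈ s
        · exact hcont x hx
        · exact continuousWithinAt_of_notMem_closure (by rwa [hs.closure_eq])
      intro x hx
      have hsubset : Set.Icc a d ⊆ (Set.Icc a b ∪ Set.Icc b c) ∪ Set.Icc c d := by
        intro y hy
        rcases le_total y b with h | h
        · exact Or.inl (Or.inl ⟨hy.1, h⟩)
        rcases le_total y c with h' | h'
        · exact Or.inl (Or.inr ⟨h, h'⟩)
        · exact Or.inr ⟨h', hy.2⟩
      exact (((hcw _ isClosed_Icc h1 x).union (hcw _ isClosed_Icc h2 x)).union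
        (hcw _ isClosed_Icc h3 x)).mono hsubset
    · intro t₁ ht₁ t₂ ht₂ hlt hDt g hg hg1 hg2 t ht
      by_cases hc1 : t₂ ≤ b
      · have m1 : t₁ ∈ Set.Icc a b := ⟨ht₁.1, by linarith⟩
        have m2 : t₂ ∈ Set.Icc a b := ⟨by linarith [ht₁.1], hc1⟩
        have mt : t ∈ Set.Icc a b := ⟨by linarith [m1.1, ht.1], by linarith [ht.2]⟩
        rw [hFf t (Or.inl mt)]
        exact hsub_ab t₁ m1 t₂ m2 hlt hDt g hg (by rwa [hFf t₁ (Or.inl m1)] at hg1)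
          (by rwa [hFf t₂ (Or.inl m2)] at hg2) t ht
      push_neg at hc1
      by_cases hc2 : c ≤ t₁
      · have m1 : t₁ ∈ Set.Icc c d := ⟨hc2, by linarith [ht₂.2]⟩
        have m2 : t₂ ∈ Set.Icc c d := ⟨by linarith, ht₂.2⟩
        have mt : t ∈ Set.Icc c d := ⟨by linarith [ht.1], by linarith [ht.2, m2.2]⟩
        rw [hFf t (Or.inr mt)]
        exact hsub_cd t₁ m1 t₂ m2 hlt hDt g hg (by rwa [hFf t₁ (Or.inr m1)] at hg1)
          (by rwa [hFf t₂ (Or.inr m2)] at hg2) t ht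
      push_neg at hc2
      by_cases hc3 : b ≤ t₁
      · by_cases hc4 : t₂ ≤ c
        · have m1 : t₁ ∈ Set.Icc b c := ⟨hc3, hc2.le⟩
          have m2 : t₂ ∈ Set.Icc b c := ⟨hc1.le, hc4⟩
          have mt : t ∈ Set.Icc b c := ⟨le_trans hc3 ht.1, le_trans ht.2 hc4⟩
          rw [hFg₀ t mt]
          exact sol_le_sol hg₀sol hg hlt hDt
            (le_of_eq (by rw [hg1, hFg₀ t₁ m1])) (le_of_eq (by rw [hg2, hFg₀ t₂ m2])) t ht
        · push_neg at hc4
          have m1 : t₁ ∈ Set.Ico b c := ⟨hc3, hc2⟩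
          have m2 : t₂ ∈ Set.Ioc c d := ⟨hc4, ht₂.2⟩
          have hgc := corner_c hbc hcd hg₀sol hg₀b hg₀c hsub_cd hc0 hdc hdcge m1 m2 hDt hg
            (by rw [hg1]; exact hFg₀ t₁ ⟨hc3, hc2.le⟩)
            (by rw [hg2]; exact hFf t₂ (Or.inr ⟨hc4.le, ht₂.2⟩))
          rcases le_total t c with htc | htc
          · rw [hFg₀ t ⟨le_trans hc3 ht.1, htc⟩]
            exact sol_le_sol hg₀sol hg hc2 (LtDK.mono (by linarith) hDt)
              (le_of_eq (by rw [hg1]; exact (hFg₀ t₁ ⟨hc3, hc2.le⟩).symm)) (by rw [hg₀c]; exact hgc)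
              t ⟨ht.1, htc⟩
          · rw [hFf t (Or.inr ⟨htc, by linarith [ht.2, ht₂.2]⟩)]
            exact jensenSub_le_sol hsub_cd ⟨le_rfl, hcd.le⟩ ⟨hc4.le, ht₂.2⟩ hc4
              (LtDK.mono (by linarith) hDt) hg (by rw [hc0]; exact hgc)
              (le_of_eq (show f t₂ = g t₂ by rw [hg2, hFf t₂ (Or.inr ⟨hc4.le, ht₂.2⟩)]))
              t ⟨htc, ht.2⟩
      · push_neg at hc3
        by_cases hc5 : t₂ ≤ c
        · have m1 : t₁ ∈ Set.Ico a b := ⟨ht₁.1, hc3⟩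
          have m2 : t₂ ∈ Set.Ioc b c := ⟨hc1, hc5⟩
          have hgb := corner_b hab hbc hg₀sol hg₀b hg₀c hsub_ab hb0 hdb hdble m1 m2 hDt hg
            (by rw [hg1]; exact hFf t₁ (Or.inl ⟨ht₁.1, hc3.le⟩))
            (by rw [hg2]; exact hFg₀ t₂ ⟨hc1.le, hc5⟩)
          rcases le_total t b with htb | htb
          · rw [hFf t (Or.inl ⟨by linarith [ht.1, ht₁.1], htb⟩)]
            exact jensenSub_le_sol hsub_ab ⟨ht₁.1, hc3.le⟩ ⟨hab.le, le_rfl⟩ hc3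
              (LtDK.mono (by linarith) hDt) hg
              (le_of_eq (show f t₁ = g t₁ by rw [hg1, hFf t₁ (Or.inl ⟨ht₁.1, hc3.le⟩)]))
              (by rw [hb0]; exact hgb) t ⟨ht.1, htb⟩
          · rw [hFg₀ t ⟨htb, by linarith [ht.2]⟩]
            exact sol_le_sol hg₀sol hg hc1 (LtDK.mono (by linarith) hDt)
              (by rw [hg₀b]; exact hgb)
              (le_of_eq (show g₀ t₂ = g t₂ by rw [hg2, hFg₀ t₂ ⟨hc1.le, hc5⟩])) t ⟨htb, ht.2⟩
        · push_neg at hc5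
          have m1 : t₁ ∈ Set.Ico a b := ⟨ht₁.1, hc3⟩
          have m2 : t₂ ∈ Set.Ioc c d := ⟨hc5, ht₂.2⟩
          obtain ⟨hgb, hgc⟩ := double_corner hab hbc hcd hD hg₀sol hg₀b hg₀c hsub_ab hsub_cd
            hb0 hc0 hdb hdc hdble hdcge m1 m2 hDt hg
            (by rw [hg1]; exact hFf t₁ (Or.inl ⟨ht₁.1, hc3.le⟩))
            (by rw [hg2]; exact hFf t₂ (Or.inr ⟨hc5.le, ht₂.2⟩))
          rcases le_total t b with htb | htb
          · rw [hFf t (Or.inl ⟨by linarith [ht.1, ht₁.1], htb⟩)]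
            exact jensenSub_le_sol hsub_ab ⟨ht₁.1, hc3.le⟩ ⟨hab.le, le_rfl⟩ hc3
              (LtDK.mono (by linarith) hDt) hg
              (le_of_eq (show f t₁ = g t₁ by rw [hg1, hFf t₁ (Or.inl ⟨ht₁.1, hc3.le⟩)]))
              (by rw [hb0]; exact hgb) t ⟨ht.1, htb⟩
          rcases le_total t c with htc | htc
          · rw [hFg₀ t ⟨htb, htc⟩]
            exact sol_le_sol hg₀sol hg hbc hD (by rw [hg₀b]; exact hgb)
              (by rw [hg₀c]; exact hgc) t ⟨htb, htc⟩
          · rw [hFf t (Or.inr ⟨htc, by linarith [ht.2, ht₂.2]⟩)]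
            exact jensenSub_le_sol hsub_cd ⟨le_rfl, hcd.le⟩ ⟨hc5.le, ht₂.2⟩ hc5
              (LtDK.mono (by linarith) hDt) hg (by rw [hc0]; exact hgc)
              (le_of_eq (show f t₂ = g t₂ by rw [hg2, hFf t₂ (Or.inr ⟨hc5.le, ht₂.2⟩)]))
              t ⟨htc, ht.2⟩
  exact ⟨⟨fun h => h32 (h13 h), h21⟩, ⟨h13, fun h => h21 (h32 h)⟩⟩
end

section
/- Let K, λ ∈ ℝ, let a < b < c < d be real numbers with c − b < D_K, let I = [a, b] ∪ [c, d], and let f : I → ℝ be continuous with f(b) = f(c) = 0. Then the following are equivalent: (i) for all t₁ < t₂ < t₃ in I with t₃ − t₁ < D_K, f satisfies the Jensen supersolution inequality for the parameters (t₁, t₂, t₃); (ii) f extends to a continuous function on [a, d] which is a supersolution of f'' − K f = λ in the sense of Jensen on [a, d]; (iii) f restricted to [a, b] and f restricted to [c, d] are each supersolutions of f'' − K f = λ in the sense of Jensen, the one-sided derivatives f'(b⁻) and f'(c⁺) exist, and for the unique solution g of g'' − K g = λ with g(b) = g(c) = 0 one has f'(b⁻) ≥ g'(b) and f'(c⁺)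 ≤ g'(c). -/
open Set MeasureTheory

lemma slope_trans {x y z vx vy vz : ℝ} (hxy : x < y) (hyz : y < z)
    (h : (vz - vy)/(z - y) ≤ (vy - vx)/(y - x)) :
    (vz - vy)/(z - y) ≤ (vz - vx)/(z - x) ∧ (vz - vx)/(z - x) ≤ (vy - vx)/(y - x) := by
  rw [div_le_div_iff₀ (by linarith) (by linarith)] at h
  constructor
  · rw [div_le_div_iff₀ (by linarith) (by linarith)]; nlinarith
  · rw [div_le_div_iff₀ (by linarith) (by linarith)]; nlinarith

lemma concave_slope3 {s : Set ℝ} {f : ℝ → ℝ} (h : ConcaveOn ℝ s f)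
    {x y z : ℝ} (hx : x ∈ s) (hz : z ∈ s) (hxy : x < y) (hyz : y < z) :
    (f z - f y)/(z - y) ≤ (f z - f x)/(z - x) ∧ (f z - f x)/(z - x) ≤ (f y - f x)/(y - x) := by
  have := (concaveOn_iff_slope_anti_adjacent.1 h).2 hx hz hxy hyz
  exact slope_trans hxy hyz this

lemma slope_eq {u : ℝ → ℝ} {β : ℝ} : ∀ x, x ≠ β → slope u β x = (u β - u x)/(β - x) := by
  intro x hx
  rw [slope_def_field]
  rw [div_eq_div_iff (sub_ne_zero.2 hx) (sub_ne_zero.2 (Ne.symm hx))]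
  ring

lemma concave_glue {u : ℝ → ℝ} {α β γ L R : ℝ} (hαβ : α < β) (hβγ : β < γ)
    (h1 : ConcaveOn ℝ (Icc α β) u) (h2 : ConcaveOn ℝ (Icc β γ) u)
    (hL : HasDerivWithinAt u L (Icc α β) β) (hR : HasDerivWithinAt u R (Icc β γ) β)
    (hRL : R ≤ L) : ConcaveOn ℝ (Icc α γ) u := by
  have hβl : β ∈ Icc α β := right_mem_Icc.2 hαβ.le
  have hβr : β ∈ Icc β γ := left_mem_Icc.2 hβγ.le
  -- slopes into β from the left are ≥ L
  have hA : ∀ x ∈ Ico α β, L ≤ (u β - u x)/(β - x) := by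
    intro x hx
    have hts : Filter.Tendsto (slope u β) (nhdsWithin β (Icc α β \ {β})) (nhds L) :=
      hasDerivWithinAt_iff_tendsto_slope.1 hL
    rw [Icc_sdiff_right, nhdsWithin_Ico_eq_nhdsLT hαβ] at hts
    refine le_of_tendsto hts ?_
    have h1' : ∀ᶠ s in nhdsWithin β (Iio β), s ∈ Ioo x β :=
      Ioo_mem_nhdsLT_of_mem ⟨hx.2, le_refl β⟩
    filter_upwards [h1'] with s hs
    rw [slope_eq s (ne_of_lt hs.2)]
    exact (concave_slope3 h1 ⟨hx.1, hx.2.le⟩ hβl hs.1 hs.2).1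
  -- slopes out of β to the right are ≤ R
  have hB : ∀ z ∈ Ioc β γ, (u z - u β)/(z - β) ≤ R := by
    intro z hz
    have hts : Filter.Tendsto (slope u β) (nhdsWithin β (Icc β γ \ {β})) (nhds R) :=
      hasDerivWithinAt_iff_tendsto_slope.1 hR
    rw [Icc_diff_left, nhdsWithin_Ioc_eq_nhdsGT hβγ] at hts
    refine ge_of_tendsto hts ?_
    have h1' : ∀ᶠ s in nhdsWithin β (Ioi β), s ∈ Ioo β z :=
      Ioo_mem_nhdsGT_of_mem ⟨le_refl β, hz.1⟩
    filter_upwards [h1'] with s hs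
    have hse : slope u β s = (u s - u β)/(s - β) := by rw [slope_def_field]
    rw [hse]
    -- (u z - u s)/(z-s) ≤ (u s - u β)/(s - β) by concavity (β,s,z); then chord comparison
    have h3 := concave_slope3 h2 hβr ⟨hz.1.le, hz.2⟩ hs.1 hs.2
    -- h3 : (u z - u s)/(z-s) ≤ (u z - u β)/(z-β) ∧ (u z - u β)/(z-β) ≤ (u s - u β)/(s-β)
    exact h3.2
  -- assemble via adjacent slopes
  rw [concaveOn_iff_slope_anti_adjacent]
  refine ⟨convex_Icc _ _, ?_⟩
  intro x y z hx hz hxy hyz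
  obtain ⟨hx1, hx2⟩ := hx
  obtain ⟨hz1, hz2⟩ := hz
  rcases le_or_gt z β with hzβ | hβz
  · exact (concaveOn_iff_slope_anti_adjacent.1 h1).2 ⟨hx1, by linarith⟩ ⟨by linarith, hzβ⟩ hxy hyz
  rcases le_or_gt β x with hβx | hxβ
  · exact (concaveOn_iff_slope_anti_adjacent.1 h2).2 ⟨hβx, by linarith⟩ ⟨by linarith, hz2⟩ hxy hyz
  -- now x < β < z
  rcases lt_trichotomy y β with hyβ | rfl | hβy
  · -- x < y < β < z : slope(y,z) ≤ slope(y,β) ≤ slope(x,y)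
    have hy1 : L ≤ (u β - u y)/(β - y) := hA y ⟨by linarith, hyβ⟩
    have hz1 : (u z - u β)/(z - β) ≤ R := hB z ⟨hβz, hz2⟩
    have key : (u z - u β)/(z - β) ≤ (u β - u y)/(β - y) := by linarith
    have h4 := slope_trans (vx := u y) (vy := u β) (vz := u z) hyβ hβz key
    -- h4.1 : (u z - u β)/(z-β) ≤ (u z - u y)/(z - y) ; h4.2 : (u z - u y)/(z-y) ≤ (u β - u y)/(β - y)
    have h5 := (concaveOn_iff_slope_anti_adjacent.1 h1).2 ⟨hx1, by linarith⟩ hβl hxy hyβ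
    -- h5 : (u β - u y)/(β - y) ≤ (u y - u x)/(y - x)
    linarith [h4.2, h5]
  · exact le_trans (hB z ⟨hβz, hz2⟩) (le_trans hRL (hA x ⟨hx1, hxβ⟩))
  · -- x < β < y < z : slope(y,z) ≤ slope(β,y) ≤ slope(x,y)
    have h5 := (concaveOn_iff_slope_anti_adjacent.1 h2).2 hβr ⟨by linarith, hz2⟩ hβy hyz
    -- h5 : (u z - u y)/(z - y) ≤ (u y - u β)/(y - β)
    have hy1 : (u y - u β)/(y - β) ≤ R := hB y ⟨hβy, by linarith⟩
    have hx1 : L ≤ (u β - u x)/(β - x) := hA x ⟨hx1, hxβ⟩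
    have key : (u y - u β)/(y - β) ≤ (u β - u x)/(β - x) := by linarith
    have h4 := slope_trans (vx := u x) (vy := u β) (vz := u y) hxβ hβy key
    -- h4.2 : (u y - u x)/(y - x) ≤ (u β - u x)/(β - x)... need slope(β,y) ≤ slope(x,y): that's h4.1
    linarith [h4.1, h5]

lemma sol_unique {K lam : ℝ} {g₁ g₂ : ℝ → ℝ} (h₁ : IsSol K lam g₁) (h₂ : IsSol K lam g₂)
    (t₀ : ℝ) (hv : g₁ t₀ = g₂ t₀) (hd : deriv g₁ t₀ = deriv g₂ t₀) : g₁ = g₂ := by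
  set u : ℝ → ℝ := fun t => g₁ t - g₂ t with hu
  set w : ℝ → ℝ := fun t => deriv g₁ t - deriv g₂ t with hw
  have hdu : ∀ t, HasDerivAt u (w t) t := fun t =>
    ((h₁.1 t).hasDerivAt).sub ((h₂.1 t).hasDerivAt)
  have hdw : ∀ t, HasDerivAt w (K * u t) t := by
    intro t
    have h0 := (h₁.2 t).sub (h₂.2 t)
    refine h0.congr_deriv ?_
    simp only [hu]
    ring
  have hu0 : u t₀ = 0 := by simp [hu, hv]
  have hw0 : w t₀ = 0 := by simp [hw, hd]
  have hzero : ∀ t, u t = 0 := by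
    rcases lt_trichotomy K 0 with hK | hK | hK
    · -- energy E = w^2 + (-K) u^2 is constant
      set E : ℝ → ℝ := fun t => w t ^ 2 + (-K) * u t ^ 2 with hE
      have hdE : ∀ t, HasDerivAt E 0 t := by
        intro t
        have h1 : HasDerivAt (fun t => w t ^ 2) (2 * w t ^ 1 * (K * u t)) t := (hdw t).pow 2
        have h2 : HasDerivAt (fun t => (-K) * u t ^ 2) ((-K) * (2 * u t ^ 1 * w t)) t :=
          ((hdu t).pow 2).const_mul (-K)
        have := h1.add h2
        refine this.congr_deriv ?_
        ring
      have hconst : ∀ t, E t = E t₀ := by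
        intro t
        exact is_const_of_deriv_eq_zero (fun s => (hdE s).differentiableAt)
          (fun s => (hdE s).deriv) t t₀
      intro t
      have h3 := hconst t
      have h4 : E t₀ = 0 := by simp [hE, hu0, hw0]
      rw [h4] at h3
      simp only [hE] at h3
      have h6 : (-K) * u t ^ 2 ≤ 0 := by nlinarith [sq_nonneg (w t)]
      have h7 : 0 ≤ (-K) * u t ^ 2 := mul_nonneg (by linarith) (sq_nonneg _)
      have h8 : u t ^ 2 = 0 :=
        (mul_eq_zero.1 (le_antisymm h6 h7)).resolve_left (by intro hc; linarith [neg_eq_zero.1 hc])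
      exact pow_eq_zero_iff two_ne_zero |>.1 h8
    · -- K = 0 : w constant 0, then u constant 0
      subst hK
      have hdw0 : ∀ s, HasDerivAt w 0 s := by
        intro s
        have := hdw s
        simpa using this
      have hwconst : ∀ t, w t = 0 := by
        intro t
        have := is_const_of_deriv_eq_zero (f := w) (fun s => (hdw0 s).differentiableAt)
          (fun s => (hdw0 s).deriv) t t₀
        rw [this, hw0]
      intro t
      have := is_const_of_deriv_eq_zero (f := u)
        (fun s => (hdu s).differentiableAt)
        (fun s => by rw [(hdu s).deriv, hwconst s]) t t₀
      rw [this, hu0]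
    · -- K > 0
      set ω := Real.sqrt K with hω
      have hω0 : 0 < ω := Real.sqrt_pos.2 hK
      have hω2 : ω ^ 2 = K := Real.sq_sqrt hK.le
      set q : ℝ → ℝ := fun t => w t - ω * u t with hq
      have hdq : ∀ t, HasDerivAt q (-ω * q t) t := by
        intro t
        have := (hdw t).sub ((hdu t).const_mul ω)
        refine this.congr_deriv ?_
        show K * u t - ω * w t = -ω * (w t - ω * u t)
        linear_combination (-(u t)) * hω2
      have hq0 : ∀ t, q t = 0 := by
        have hr : ∀ t, HasDerivAt (fun t => q t * Real.exp (ω * t)) 0 t := by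
          intro t
          have he : HasDerivAt (fun t => Real.exp (ω * t)) (Real.exp (ω * t) * ω) t := by
            have h5 : HasDerivAt (fun t : ℝ => ω * t) ω t := by
              simpa using (hasDerivAt_id t).const_mul ω
            exact (Real.hasDerivAt_exp (ω * t)).comp t h5
          have := (hdq t).mul he
          refine this.congr_deriv ?_
          ring
        intro t
        have := is_const_of_deriv_eq_zero (fun s => (hr s).differentiableAt)
          (fun s => (hr s).deriv) t t₀
        have h6 : q t₀ * Real.exp (ω * t₀) = 0 := by rw [hq]; simp [hu0, hw0]
        rw [h6] at this
        have := mul_eq_zero.1 this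
        rcases this with h | h
        · exact h
        · exact absurd h (Real.exp_ne_zero _)
      -- now u' = ω u
      have hs : ∀ t, HasDerivAt (fun t => u t * Real.exp (-(ω * t))) 0 t := by
        intro t
        have he : HasDerivAt (fun t => Real.exp (-(ω * t))) (Real.exp (-(ω * t)) * (-ω)) t := by
          have h5 : HasDerivAt (fun t : ℝ => -(ω * t)) (-ω) t := by
            exact ((hasDerivAt_id t).const_mul ω).neg.congr_deriv (by simp)
          exact (Real.hasDerivAt_exp _).comp t h5
        have := (hdu t).mul he
        refine this.congr_deriv ?_
        have h7 : w t = ω * u t := by have := hq0 t; simp only [hq] at this; linarith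
        rw [h7]; ring
      intro t
      have := is_const_of_deriv_eq_zero (fun s => (hs s).differentiableAt)
        (fun s => (hs s).deriv) t t₀
      have h6 : u t₀ * Real.exp (-(ω * t₀)) = 0 := by rw [hu0]; ring
      rw [h6] at this
      rcases mul_eq_zero.1 this with h | h
      · exact h
      · exact absurd h (Real.exp_ne_zero _)
  funext t
  have := hzero t
  simp only [hu] at this
  linarith

structure Chart (K lam : ℝ) where
  U : Set ℝ
  hUo : IsOpen U
  hUc : Convex ℝ U
  m : ℝ → ℝ
  mq : ℝ → ℝ
  φ : ℝ → ℝ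
  φq : ℝ → ℝ
  ψ : ℝ → ℝ
  p : ℝ → ℝ
  pq : ℝ → ℝ
  hm : ∀ t ∈ U, 0 < m t
  hdm : ∀ t ∈ U, HasDerivAt m (mq t) t
  hdφ : ∀ t ∈ U, HasDerivAt φ (φq t) t
  hφq : ∀ t ∈ U, 0 < φq t
  hψφ : ∀ t ∈ U, ψ (φ t) = t
  hdψ : ∀ t ∈ U, HasDerivAt ψ (φq t)⁻¹ (φ t)
  hdp : ∀ t ∈ U, HasDerivAt p (pq t) t
  hDK : ∀ s₁ ∈ U, ∀ s₂ ∈ U, LtDK K (s₂ - s₁)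
  l2g : ∀ A B : ℝ, ∃ g, IsSol K lam g ∧ ∀ t ∈ U, g t = m t * (A * φ t + B) + p t
  g2l : ∀ g, IsSol K lam g → ∃ A B : ℝ, ∀ t ∈ U, g t = m t * (A * φ t + B) + p t

namespace Chart
variable {K lam : ℝ} (C : Chart K lam)

noncomputable def V (f : ℝ → ℝ) : ℝ → ℝ := fun s => (f (C.ψ s) - C.p (C.ψ s)) / C.m (C.ψ s)

lemma Vφ (f : ℝ → ℝ) {t : ℝ} (ht : t ∈ C.U) : C.V f (C.φ t) = (f t - C.p t) / C.m t := by
  unfold V; rw [C.hψφ t ht]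

lemma mono : StrictMonoOn C.φ C.U := by
  apply strictMonoOn_of_hasDerivWithinAt_pos C.hUc
  · exact fun t ht => (C.hdφ t ht).continuousAt.continuousWithinAt
  · intro t ht
    rw [C.hUo.interior_eq] at ht
    exact ((C.hdφ t ht).hasDerivWithinAt : HasDerivWithinAt C.φ (C.φq t) (interior C.U) t)
  · intro t ht
    rw [C.hUo.interior_eq] at ht
    exact C.hφq t ht

lemma contφ {u v : ℝ} (huv : Icc u v ⊆ C.U) : ContinuousOn C.φ (Icc u v) :=
  fun t ht => ((C.hdφ t (huv ht)).continuousAt).continuousWithinAt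

lemma surj {u v : ℝ} (huv : u ≤ v) (hsub : Icc u v ⊆ C.U) :
    ∀ s ∈ Icc (C.φ u) (C.φ v), ∃ t ∈ Icc u v, C.φ t = s := by
  intro s hs
  have := intermediate_value_Icc huv (C.contφ hsub)
  obtain ⟨t, ht, hts⟩ := this hs
  exact ⟨t, ht, hts⟩

lemma mapsToψ {u v : ℝ} (huv : u ≤ v) (hsub : Icc u v ⊆ C.U) :
    Set.MapsTo C.ψ (Icc (C.φ u) (C.φ v)) (Icc u v) := by
  intro s hs
  obtain ⟨t, ht, rfl⟩ := C.surj huv hsub s hs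
  rw [C.hψφ t (hsub ht)]; exact ht

lemma Vaff (f : ℝ → ℝ) {u v A B : ℝ} (huv : u ≤ v) (hsub : Icc u v ⊆ C.U)
    (hf : ∀ t ∈ Icc u v, f t = C.m t * (A * C.φ t + B) + C.p t) :
    ∀ s ∈ Icc (C.φ u) (C.φ v), C.V f s = A * s + B := by
  intro s hs
  obtain ⟨t, ht, rfl⟩ := C.surj huv hsub s hs
  rw [C.Vφ f (hsub ht), hf t ht]
  field_simp [ne_of_gt (C.hm t (hsub ht))]
  ring

lemma mapsToφ {u v : ℝ} (hsub : Icc u v ⊆ C.U) :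
    Set.MapsTo C.φ (Icc u v) (Icc (C.φ u) (C.φ v)) := by
  intro t ht
  rcases eq_or_lt_of_le ht.1 with h | h
  · rcases eq_or_lt_of_le ht.2 with h2 | h2
    · subst h; exact ⟨le_refl _, by rw [h2]⟩
    · subst h; exact ⟨le_refl _, (C.mono (hsub ht) (hsub (right_mem_Icc.2 (ht.1.trans ht.2))) h2).le⟩
  · constructor
    · exact (C.mono (hsub (left_mem_Icc.2 (ht.1.trans ht.2))) (hsub ht) h).le
    · rcases eq_or_lt_of_le ht.2 with h2 | h2
      · rw [h2]
      · exact (C.mono (hsub ht) (hsub (right_mem_Icc.2 (ht.1.trans ht.2))) h2).le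

lemma super_to_concave (f : ℝ → ℝ) {u v : ℝ} (huv : u < v) (hsub : Icc u v ⊆ C.U)
    (Hs : ∀ s₁ ∈ Icc u v, ∀ s₂ ∈ Icc u v, s₁ < s₂ →
      ∀ g, IsSol K lam g → g s₁ = f s₁ → g s₂ = f s₂ → ∀ t ∈ Icc s₁ s₂, g t ≤ f t) :
    ConcaveOn ℝ (Icc (C.φ u) (C.φ v)) (C.V f) := by
  rw [concaveOn_iff_slope_anti_adjacent]
  refine ⟨convex_Icc _ _, ?_⟩
  intro x y z hx hz hxy hyz
  obtain ⟨tx, htx, hφx⟩ := C.surj huv.le hsub x hx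
  obtain ⟨ty, hty, hφy⟩ := C.surj huv.le hsub y ⟨hx.1.trans hxy.le, hyz.le.trans hz.2⟩
  obtain ⟨tz, htz, hφz⟩ := C.surj huv.le hsub z hz
  have hxy' : tx < ty := by
    rw [← C.mono.lt_iff_lt (hsub htx) (hsub hty)]; rw [hφx, hφy]; exact hxy
  have hyz' : ty < tz := by
    rw [← C.mono.lt_iff_lt (hsub hty) (hsub htz)]; rw [hφy, hφz]; exact hyz
  set A := (C.V f z - C.V f x)/(z - x) with hA
  set B := C.V f x - A * x with hB
  have hVx : C.V f x = A * x + B := by rw [hB]; ring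
  have hVz : C.V f z = A * z + B := by
    rw [hB, hA]
    have hzx : z - x ≠ 0 := sub_ne_zero.2 (ne_of_gt (hxy.trans hyz))
    field_simp
    ring
  obtain ⟨g, hg, hgrep⟩ := C.l2g A B
  have hval : ∀ t ∈ Icc u v, ∀ w, C.φ t = w → C.V f w = A * w + B → g t = f t := by
    intro t ht w hw hVw
    have htU := hsub ht
    rw [hgrep t htU, hw]
    have hkey : A * w + B = (f t - C.p t)/C.m t := by
      rw [← hVw, ← hw, C.Vφ f htU]
    rw [hkey]
    field_simp [ne_of_gt (C.hm t htU)]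
    ring
  have hgx : g tx = f tx := hval tx htx x hφx hVx
  have hgz : g tz = f tz := hval tz htz z hφz hVz
  have hmid : g ty ≤ f ty :=
    Hs tx htx tz htz (hxy'.trans hyz') g hg hgx hgz ty ⟨hxy'.le, hyz'.le⟩
  have htyU := hsub hty
  have hVy : A * y + B ≤ C.V f y := by
    have h1 : g ty = C.m ty * (A * y + B) + C.p ty := by rw [hgrep ty htyU, hφy]
    have h2 : C.V f y = (f ty - C.p ty) / C.m ty := by rw [← hφy, C.Vφ f htyU]
    rw [h2, le_div_iff₀ (C.hm ty htyU)]
    nlinarith [C.hm ty htyU]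
  have e1 : (C.V f z - C.V f y)/(z - y) ≤ A := by
    rw [div_le_iff₀ (by linarith)]; nlinarith
  have e2 : A ≤ (C.V f y - C.V f x)/(y - x) := by
    rw [le_div_iff₀ (by linarith)]; nlinarith
  exact e1.trans e2

lemma concave_chord_le {v : ℝ → ℝ} {x₁ x₂ A B : ℝ} (h : ConcaveOn ℝ (Icc x₁ x₂) v) (hx : x₁ < x₂)
    (h1 : v x₁ = A * x₁ + B) (h2 : v x₂ = A * x₂ + B) : ∀ z ∈ Icc x₁ x₂, A * z + B ≤ v z := by
  intro z hz
  have hd : x₂ - x₁ ≠ 0 := sub_ne_zero.2 (ne_of_gt hx)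
  set μ := (x₂ - z)/(x₂ - x₁) with hμdef
  set ν := (z - x₁)/(x₂ - x₁) with hνdef
  have hμ : 0 ≤ μ := div_nonneg (by linarith [hz.2]) (by linarith)
  have hν : 0 ≤ ν := div_nonneg (by linarith [hz.1]) (by linarith)
  have hsum : μ + ν = 1 := by rw [hμdef, hνdef]; field_simp; ring
  have hcomb : μ * x₁ + ν * x₂ = z := by rw [hμdef, hνdef]; field_simp; ring
  have hc := h.2 (left_mem_Icc.2 hx.le) (right_mem_Icc.2 hx.le) hμ hν hsum
  simp only [smul_eq_mul, hcomb] at hc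
  calc A * z + B = μ * (A * x₁ + B) + ν * (A * x₂ + B) := by
        have : A * z + B = A * (μ * x₁ + ν * x₂) + B * (μ + ν) := by rw [hcomb, hsum]; ring
        rw [this]; ring
    _ = μ * v x₁ + ν * v x₂ := by rw [h1, h2]
    _ ≤ v z := hc

lemma concave_to_chord (f : ℝ → ℝ) {u v : ℝ} (huv : u < v) (hsub : Icc u v ⊆ C.U)
    (hconc : ConcaveOn ℝ (Icc (C.φ u) (C.φ v)) (C.V f))
    {g : ℝ → ℝ} (hg : IsSol K lam g) (hgu : g u = f u) (hgv : g v = f v) :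
    ∀ t ∈ Icc u v, g t ≤ f t := by
  obtain ⟨A, B, hrep⟩ := C.g2l g hg
  have huU := hsub (left_mem_Icc.2 huv.le)
  have hvU := hsub (right_mem_Icc.2 huv.le)
  have hkey : ∀ t ∈ Icc u v, g t = f t → C.V f (C.φ t) = A * C.φ t + B := by
    intro t ht hgt
    have htU := hsub ht
    rw [C.Vφ f htU, ← hgt, hrep t htU]
    field_simp [ne_of_gt (C.hm t htU)]
    ring
  have hchord := concave_chord_le hconc (C.mono huU hvU huv)
    (hkey u (left_mem_Icc.2 huv.le) hgu) (hkey v (right_mem_Icc.2 huv.le) hgv)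
  intro t ht
  have htU := hsub ht
  have h1 := hchord (C.φ t) (C.mapsToφ hsub ht)
  rw [C.Vφ f htU, le_div_iff₀ (C.hm t htU)] at h1
  rw [hrep t htU]
  nlinarith [h1]

lemma sol_deriv {g : ℝ → ℝ} {A B : ℝ}
    (hrep : ∀ t ∈ C.U, g t = C.m t * (A * C.φ t + B) + C.p t) {t : ℝ} (ht : t ∈ C.U) :
    deriv g t = C.mq t * (A * C.φ t + B) + C.m t * (A * C.φq t) + C.pq t := by
  have h1 : HasDerivAt (fun s => C.m s * (A * C.φ s + B) + C.p s)
      (C.mq t * (A * C.φ t + B) + C.m t * (A * C.φq t) + C.pq t) t :=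
    ((C.hdm t ht).mul (((C.hdφ t ht).const_mul A).add_const B)).add (C.hdp t ht)
  have h2 : HasDerivAt g (C.mq t * (A * C.φ t + B) + C.m t * (A * C.φq t) + C.pq t) t := by
    refine h1.congr_of_eventuallyEq ?_
    filter_upwards [C.hUo.mem_nhds ht] with s hs
    exact hrep s hs
  exact h2.deriv

lemma deriv_transfer_fwd (f : ℝ → ℝ) {u v x₀ D : ℝ} (huv : u ≤ v) (hsub : Icc u v ⊆ C.U)
    (hx₀ : x₀ ∈ Icc u v) (hf : HasDerivWithinAt f D (Icc u v) x₀) :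
    HasDerivWithinAt (C.V f)
      (((D - C.pq x₀) * C.m x₀ - (f x₀ - C.p x₀) * C.mq x₀) / (C.m x₀ ^ 2) * (C.φq x₀)⁻¹)
      (Icc (C.φ u) (C.φ v)) (C.φ x₀) := by
  have hx₀U := hsub hx₀
  have hquot : HasDerivWithinAt (fun t => (f t - C.p t) / C.m t)
      (((D - C.pq x₀) * C.m x₀ - (f x₀ - C.p x₀) * C.mq x₀) / (C.m x₀ ^ 2)) (Icc u v) x₀ :=
    (hf.sub (C.hdp x₀ hx₀U).hasDerivWithinAt).div (C.hdm x₀ hx₀U).hasDerivWithinAt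
      (ne_of_gt (C.hm x₀ hx₀U))
  have hψ : HasDerivWithinAt C.ψ (C.φq x₀)⁻¹ (Icc (C.φ u) (C.φ v)) (C.φ x₀) :=
    (C.hdψ x₀ hx₀U).hasDerivWithinAt
  exact HasDerivWithinAt.comp (C.φ x₀) (by rw [C.hψφ x₀ hx₀U]; exact hquot) hψ
    (C.mapsToψ huv hsub)

lemma deriv_transfer_bwd (f : ℝ → ℝ) {u v x₀ L : ℝ} (huv : u ≤ v) (hsub : Icc u v ⊆ C.U)
    (hx₀ : x₀ ∈ Icc u v)
    (hV : HasDerivWithinAt (C.V f) L (Icc (C.φ u) (C.φ v)) (C.φ x₀)) :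
    HasDerivWithinAt f (C.mq x₀ * C.V f (C.φ x₀) + C.m x₀ * (L * C.φq x₀) + C.pq x₀)
      (Icc u v) x₀ := by
  have hx₀U := hsub hx₀
  have hcomp : HasDerivWithinAt (fun t => C.V f (C.φ t)) (L * C.φq x₀) (Icc u v) x₀ :=
    HasDerivWithinAt.comp x₀ hV (C.hdφ x₀ hx₀U).hasDerivWithinAt (C.mapsToφ hsub)
  have hprod : HasDerivWithinAt (fun t => C.m t * C.V f (C.φ t) + C.p t)
      (C.mq x₀ * C.V f (C.φ x₀) + C.m x₀ * (L * C.φq x₀) + C.pq x₀) (Icc u v) x₀ :=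
    ((C.hdm x₀ hx₀U).hasDerivWithinAt.mul hcomp).add (C.hdp x₀ hx₀U).hasDerivWithinAt
  refine hprod.congr ?_ ?_
  · intro t ht
    have htU := hsub ht
    rw [C.Vφ f htU]
    field_simp [ne_of_gt (C.hm t htU)]
    ring
  · rw [C.Vφ f hx₀U]
    field_simp [ne_of_gt (C.hm x₀ hx₀U)]
    ring

end Chart
lemma chart_neg (K lam x y : ℝ) (hxy : x < y) (hK : K < 0) (hlen : y - x < Real.pi / Real.sqrt (-K)) :
    ∃ C : Chart K lam, Icc x y ⊆ C.U := by
  have hKne : K ≠ 0 := ne_of_lt hK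
  set ω := Real.sqrt (-K) with hωdef
  have hω0 : 0 < ω := Real.sqrt_pos.2 (by linarith)
  have hω2 : ω ^ 2 = -K := Real.sq_sqrt (by linarith)
  set t₀ := (x + y)/2 with ht₀
  set r := Real.pi/(2*ω) with hr
  have hr0 : 0 < r := by positivity
  set U : Set ℝ := Ioo (t₀ - r) (t₀ + r) with hU
  have hmem : ∀ t ∈ U, ω * (t - t₀) ∈ Ioo (-(Real.pi/2)) (Real.pi/2) := by
    intro t ht
    obtain ⟨h1, h2⟩ := ht
    constructor
    · have : -(r) < t - t₀ := by linarith
      have h3 : ω * (-(r)) < ω * (t - t₀) := by exact (mul_lt_mul_iff_right₀ hω0).2 this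
      have h4 : ω * (-(r)) = -(Real.pi/2) := by rw [hr]; field_simp
      linarith
    · have : t - t₀ < r := by linarith
      have h3 : ω * (t - t₀) < ω * r := (mul_lt_mul_iff_right₀ hω0).2 this
      have h4 : ω * r = Real.pi/2 := by rw [hr]; field_simp
      linarith
  have hcos : ∀ t ∈ U, 0 < Real.cos (ω * (t - t₀)) := fun t ht =>
    Real.cos_pos_of_mem_Ioo (hmem t ht)
  have hdθ : ∀ t : ℝ, HasDerivAt (fun s => ω * (s - t₀)) ω t := by
    intro t
    simpa using ((hasDerivAt_id t).sub_const t₀).const_mul ω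
  have htansq : ∀ a : ℝ, Real.cos a ≠ 0 → 1 + Real.tan a ^ 2 = 1 / Real.cos a ^ 2 := by
    intro a ha
    rw [Real.tan_eq_sin_div_cos]
    field_simp
    exact Real.cos_sq_add_sin_sq a
  -- the family of global solutions
  have hl2g : ∀ A B : ℝ, IsSol K lam
      (fun t => A * Real.sin (ω * (t - t₀)) + B * Real.cos (ω * (t - t₀)) + (-lam/K)) := by
    intro A B
    set g : ℝ → ℝ := fun t => A * Real.sin (ω * (t - t₀)) + B * Real.cos (ω * (t - t₀)) + (-lam/K)
      with hg
    have hderiv : ∀ t, HasDerivAt g (A * (Real.cos (ω * (t - t₀)) * ω)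
        + B * (-Real.sin (ω * (t - t₀)) * ω)) t := by
      intro t
      exact ((((Real.hasDerivAt_sin _).comp t (hdθ t)).const_mul A).add
        (((Real.hasDerivAt_cos _).comp t (hdθ t)).const_mul B)).add_const _
    have hderiv' : deriv g = fun t => A * (Real.cos (ω * (t - t₀)) * ω)
        + B * (-Real.sin (ω * (t - t₀)) * ω) := funext fun t => (hderiv t).deriv
    constructor
    · exact fun t => (hderiv t).differentiableAt
    · intro t
      rw [hderiv']
      have h := (((Real.hasDerivAt_cos _).comp t (hdθ t)).const_mul (A*ω)).add
        (((Real.hasDerivAt_sin _).comp t (hdθ t)).const_mul (-(B*ω)))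
      have hfun : (fun s => A * (Real.cos (ω * (s - t₀)) * ω) + B * (-Real.sin (ω * (s - t₀)) * ω))
          = (fun s => (A*ω) * Real.cos (ω * (s - t₀)) + (-(B*ω)) * Real.sin (ω * (s - t₀))) := by
        funext s; ring
      rw [hfun]
      refine h.congr_deriv ?_
      have e : K * (-lam/K) = -lam := by field_simp
      show _ = K * (A * Real.sin (ω * (t - t₀)) + B * Real.cos (ω * (t - t₀)) + (-lam/K)) + lam
      linear_combination (-(A * Real.sin (ω * (t - t₀)) + B * Real.cos (ω * (t - t₀)))) * hω2 - e
  refine ⟨⟨U, isOpen_Ioo, convex_Ioo _ _,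
    (fun t => Real.cos (ω * (t - t₀))), (fun t => -Real.sin (ω * (t - t₀)) * ω),
    (fun t => Real.tan (ω * (t - t₀))), (fun t => (1 / Real.cos (ω * (t - t₀)) ^ 2) * ω),
    (fun s => t₀ + Real.arctan s / ω), (fun _ => -lam/K), (fun _ => 0),
    hcos, ?_, ?_, ?_, ?_, ?_, ?_, ?_, ?_, ?_⟩, ?_⟩
  · -- hdm
    exact fun t ht => (Real.hasDerivAt_cos _).comp t (hdθ t)
  · -- hdφ
    exact fun t ht => by have h := (Real.hasDerivAt_tan (ne_of_gt (hcos t ht))).comp t (hdθ t); exact h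
  · -- hφq
    intro t ht
    have := hcos t ht
    positivity
  · -- hψφ
    intro t ht
    show t₀ + Real.arctan (Real.tan (ω * (t - t₀))) / ω = t
    rw [Real.arctan_tan (hmem t ht).1 (hmem t ht).2]
    rw [mul_div_cancel_left₀ _ (ne_of_gt hω0)]
    ring
  · -- hdψ
    intro t ht
    have h1 : HasDerivAt (fun s => t₀ + Real.arctan s / ω)
        ((1 / (1 + Real.tan (ω * (t - t₀)) ^ 2)) / ω) (Real.tan (ω * (t - t₀))) :=
      (((Real.hasDerivAt_arctan _).div_const ω).const_add t₀)
    show HasDerivAt (fun s => t₀ + Real.arctan s / ω)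
      ((1 / Real.cos (ω * (t - t₀)) ^ 2 * ω))⁻¹ (Real.tan (ω * (t - t₀)))
    have heq : ((1 / Real.cos (ω * (t - t₀)) ^ 2 * ω))⁻¹
        = (1 / (1 + Real.tan (ω * (t - t₀)) ^ 2)) / ω := by
      rw [htansq _ (ne_of_gt (hcos t ht))]
      have hc := ne_of_gt (hcos t ht)
      field_simp
    rw [heq]
    exact h1
  · -- hdp
    exact fun t ht => hasDerivAt_const t _
  · -- hDK
    intro s₁ hs₁ s₂ hs₂ hK'
    obtain ⟨h1, h2⟩ := hs₁
    obtain ⟨h3, h4⟩ := hs₂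
    have h5 : Real.pi/Real.sqrt (-K) = 2*r := by
      rw [hr, ← hωdef]
      field_simp
    rw [h5]
    linarith
  · -- l2g
    intro A B
    refine ⟨_, hl2g A B, ?_⟩
    intro t ht
    have hc := ne_of_gt (hcos t ht)
    rw [Real.tan_eq_sin_div_cos]
    field_simp
  · -- g2l
    intro g hg
    refine ⟨deriv g t₀ / ω, g t₀ + lam/K, ?_⟩
    have hsol := hl2g (deriv g t₀ / ω) (g t₀ + lam/K)
    set A := deriv g t₀ / ω with hA
    set B := g t₀ + lam/K with hB
    set gE : ℝ → ℝ := fun t => A * Real.sin (ω * (t - t₀)) + B * Real.cos (ω * (t - t₀)) + (-lam/K)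
      with hgE
    have h0 : ω * (t₀ - t₀) = 0 := by ring
    have hval : gE t₀ = g t₀ := by
      simp only [hgE]
      rw [h0, Real.sin_zero, Real.cos_zero, hB]
      ring
    have hder : deriv gE t₀ = deriv g t₀ := by
      have hderiv : ∀ t, HasDerivAt gE (A * (Real.cos (ω * (t - t₀)) * ω)
          + B * (-Real.sin (ω * (t - t₀)) * ω)) t := by
        intro t
        exact ((((Real.hasDerivAt_sin _).comp t (hdθ t)).const_mul A).add
          (((Real.hasDerivAt_cos _).comp t (hdθ t)).const_mul B)).add_const _
      rw [(hderiv t₀).deriv]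
      rw [h0, Real.sin_zero, Real.cos_zero, hA]
      field_simp
      simp
    have hEq := sol_unique hsol hg t₀ hval hder
    rw [← hEq]
    intro t ht
    have hc := ne_of_gt (hcos t ht)
    rw [Real.tan_eq_sin_div_cos]
    field_simp [hKne]
    ring_nf
    simp only [hgE]
    field_simp
    ring_nf
  · -- Icc x y ⊆ U
    intro t ht
    obtain ⟨h1, h2⟩ := ht
    have hlen2 : y - x < 2 * r := by
      have h6 : 2 * r = Real.pi / ω := by rw [hr]; field_simp
      rw [h6]
      exact hlen
    constructor
    · rw [ht₀] at *; linarith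
    · rw [ht₀] at *; linarith

lemma chart_zero (lam : ℝ) : ∃ C : Chart 0 lam, ∀ s : ℝ, s ∈ C.U := by
  have hdp : ∀ t : ℝ, HasDerivAt (fun t : ℝ => lam * t^2/2) (lam * t) t := by
    intro t
    have h := ((hasDerivAt_pow 2 t).const_mul lam).div_const 2
    refine h.congr_deriv ?_
    ring
  have hl2g : ∀ A B : ℝ, IsSol 0 lam (fun t => A * t + B + lam * t^2/2) := by
    intro A B
    have hderiv : ∀ t : ℝ, HasDerivAt (fun t => A * t + B + lam * t^2/2) (A + lam * t) t := by
      intro t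
      have h := (((hasDerivAt_id t).const_mul A).add_const B).add (hdp t)
      refine h.congr_deriv ?_
      ring
    have hderiv' : deriv (fun t => A * t + B + lam * t^2/2) = fun t => A + lam * t :=
      funext fun t => (hderiv t).deriv
    constructor
    · exact fun t => (hderiv t).differentiableAt
    · intro t
      rw [hderiv']
      have h := (hasDerivAt_const t A).add ((hasDerivAt_id t).const_mul lam)
      refine h.congr_deriv ?_
      ring
  refine ⟨⟨univ, isOpen_univ, convex_univ,
    (fun _ => 1), (fun _ => 0), (fun t => t), (fun _ => 1), (fun s => s),
    (fun t => lam * t^2/2), (fun t => lam * t),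
    fun _ _ => one_pos, fun t _ => hasDerivAt_const t 1, fun t _ => hasDerivAt_id t,
    fun _ _ => one_pos, fun _ _ => rfl, ?_, fun t _ => hdp t, ?_, ?_, ?_⟩, fun s => mem_univ s⟩
  · intro t _
    exact (hasDerivAt_id t).congr_deriv (by simp)
  · intro s₁ _ s₂ _ h
    exact absurd h (lt_irrefl 0)
  · intro A B
    refine ⟨fun t => A * t + B + lam * t^2/2, hl2g A B, ?_⟩
    intro t _
    simp only
    ring
  · intro g hg
    refine ⟨deriv g 0, g 0, ?_⟩
    set A := deriv g 0 with hA
    set B := g 0 with hB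
    set gE : ℝ → ℝ := fun t => A * t + B + lam * t^2/2 with hgE
    have hval : gE 0 = g 0 := by simp [hgE, hB]
    have hder : deriv gE 0 = deriv g 0 := by
      have hderiv : ∀ t : ℝ, HasDerivAt gE (A + lam * t) t := by
        intro t
        have h := (((hasDerivAt_id t).const_mul A).add_const B).add (hdp t)
        refine h.congr_deriv ?_
        ring
      rw [(hderiv 0).deriv, hA]
      ring
    have hEq := sol_unique (hl2g A B) hg 0 hval hder
    have hEq' : gE = g := hEq
    rw [← hEq']
    intro t _
    simp only [hgE]
    ring

lemma chart_pos (K lam : ℝ) (hK : 0 < K) : ∃ C : Chart K lam, ∀ s : ℝ, s ∈ C.U := by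
  have hKne : K ≠ 0 := ne_of_gt hK
  set ω := Real.sqrt K with hωdef
  have hω0 : 0 < ω := Real.sqrt_pos.2 hK
  have hω2 : ω ^ 2 = K := Real.sq_sqrt hK.le
  have hd1 : ∀ t : ℝ, HasDerivAt (fun t => Real.exp (ω * t)) (Real.exp (ω * t) * ω) t := by
    intro t
    exact (Real.hasDerivAt_exp _).comp t (by simpa using (hasDerivAt_id t).const_mul ω)
  have hd2 : ∀ t : ℝ, HasDerivAt (fun t => Real.exp (-(ω * t))) (Real.exp (-(ω * t)) * (-ω)) t := by
    intro t
    exact (Real.hasDerivAt_exp _).comp t (((hasDerivAt_id t).const_mul ω).neg.congr_deriv (by simp)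
      : HasDerivAt (fun t : ℝ => -(ω * t)) (-ω) t)
  have hd3 : ∀ t : ℝ, HasDerivAt (fun t => Real.exp ((2*ω) * t)) (Real.exp ((2*ω) * t) * (2*ω)) t := by
    intro t
    exact (Real.hasDerivAt_exp _).comp t (by simpa using (hasDerivAt_id t).const_mul (2*ω))
  have hl2g : ∀ A B : ℝ, IsSol K lam
      (fun t => A * Real.exp (ω * t) + B * Real.exp (-(ω * t)) + (-lam/K)) := by
    intro A B
    have hderiv : ∀ t, HasDerivAt (fun t => A * Real.exp (ω * t) + B * Real.exp (-(ω * t)) + (-lam/K))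
        (A * (Real.exp (ω * t) * ω) + B * (Real.exp (-(ω * t)) * (-ω))) t := by
      intro t
      exact (((hd1 t).const_mul A).add ((hd2 t).const_mul B)).add_const _
    have hderiv' : deriv (fun t => A * Real.exp (ω * t) + B * Real.exp (-(ω * t)) + (-lam/K))
        = fun t => A * (Real.exp (ω * t) * ω) + B * (Real.exp (-(ω * t)) * (-ω)) :=
      funext fun t => (hderiv t).deriv
    constructor
    · exact fun t => (hderiv t).differentiableAt
    · intro t
      rw [hderiv']
      have h := (((hd1 t).const_mul (A*ω)).add ((hd2 t).const_mul (B*(-ω))))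
      have hfun : (fun s => A * (Real.exp (ω * s) * ω) + B * (Real.exp (-(ω * s)) * (-ω)))
          = (fun s => (A*ω) * Real.exp (ω * s) + (B*(-ω)) * Real.exp (-(ω * s))) := by
        funext s; ring
      rw [hfun]
      refine h.congr_deriv ?_
      have e : K * (-lam/K) = -lam := by field_simp
      show _ = K * (A * Real.exp (ω * t) + B * Real.exp (-(ω * t)) + (-lam/K)) + lam
      linear_combination (A * Real.exp (ω * t) + B * Real.exp (-(ω * t))) * hω2 - e
  have hrep : ∀ A B t : ℝ, Real.exp (-(ω * t)) * (A * Real.exp ((2*ω) * t) + B) + (-lam/K)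
      = A * Real.exp (ω * t) + B * Real.exp (-(ω * t)) + (-lam/K) := by
    intro A B t
    have he : Real.exp (-(ω * t)) * Real.exp ((2*ω) * t) = Real.exp (ω * t) := by
      rw [← Real.exp_add]
      congr 1
      ring
    calc Real.exp (-(ω * t)) * (A * Real.exp ((2*ω) * t) + B) + (-lam/K)
        = A * (Real.exp (-(ω * t)) * Real.exp ((2*ω) * t)) + B * Real.exp (-(ω * t)) + (-lam/K) := by
          ring
      _ = A * Real.exp (ω * t) + B * Real.exp (-(ω * t)) + (-lam/K) := by rw [he]
  refine ⟨⟨univ, isOpen_univ, convex_univ,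
    (fun t => Real.exp (-(ω * t))), (fun t => Real.exp (-(ω * t)) * (-ω)),
    (fun t => Real.exp ((2*ω) * t)), (fun t => Real.exp ((2*ω) * t) * (2*ω)),
    (fun s => Real.log s / (2*ω)), (fun _ => -lam/K), (fun _ => 0),
    fun t _ => Real.exp_pos _, fun t _ => hd2 t, fun t _ => hd3 t, ?_, ?_, ?_,
    fun t _ => hasDerivAt_const t _, ?_, ?_, ?_⟩, fun s => mem_univ s⟩
  · intro t _
    positivity
  · intro t _
    show Real.log (Real.exp ((2*ω) * t)) / (2*ω) = t
    rw [Real.log_exp, mul_comm, mul_div_assoc, div_self (by positivity : (2*ω) ≠ 0), mul_one]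
  · intro t _
    show HasDerivAt (fun s => Real.log s / (2*ω)) ((Real.exp ((2*ω) * t) * (2*ω)))⁻¹
      (Real.exp ((2*ω) * t))
    have h1 := (Real.hasDerivAt_log (Real.exp_ne_zero ((2*ω) * t))).div_const (2*ω)
    refine h1.congr_deriv ?_
    rw [mul_inv]
    rw [div_eq_mul_inv]
  · intro s₁ _ s₂ _ h
    exact absurd h (by linarith)
  · intro A B
    refine ⟨_, hl2g A B, ?_⟩
    intro t _
    exact (hrep A B t).symm
  · intro g hg
    refine ⟨(g 0 + lam/K + deriv g 0/ω)/2, (g 0 + lam/K - deriv g 0/ω)/2, ?_⟩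
    set A := (g 0 + lam/K + deriv g 0/ω)/2 with hA
    set B := (g 0 + lam/K - deriv g 0/ω)/2 with hB
    set gE : ℝ → ℝ := fun t => A * Real.exp (ω * t) + B * Real.exp (-(ω * t)) + (-lam/K) with hgE
    have hval : gE 0 = g 0 := by
      simp only [hgE, hA, hB]
      norm_num
      field_simp
      ring
    have hder : deriv gE 0 = deriv g 0 := by
      have hderiv : ∀ t, HasDerivAt gE
          (A * (Real.exp (ω * t) * ω) + B * (Real.exp (-(ω * t)) * (-ω))) t := by
        intro t
        exact (((hd1 t).const_mul A).add ((hd2 t).const_mul B)).add_const _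
      rw [(hderiv 0).deriv]
      simp only [hA, hB]
      norm_num
      field_simp
      ring
    have hEq := sol_unique (hl2g A B) hg 0 hval hder
    have hEq' : gE = g := hEq
    rw [← hEq']
    intro t _
    simp only [hgE]
    exact (hrep A B t).symm

lemma chart_exists (K lam x y : ℝ) (hxy : x < y) (hD : LtDK K (y - x)) :
    ∃ C : Chart K lam, Icc x y ⊆ C.U := by
  rcases lt_trichotomy K 0 with hK | hK | hK
  · exact chart_neg K lam x y hxy hK (hD hK)
  · subst hK
    obtain ⟨C, hC⟩ := chart_zero lam
    exact ⟨C, fun t _ => hC t⟩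
  · obtain ⟨C, hC⟩ := chart_pos K lam hK
    exact ⟨C, fun t _ => hC t⟩

lemma LtDK_mono {K x y : ℝ} (h : LtDK K x) (hyx : y ≤ x) : LtDK K y :=
  fun hK => lt_of_le_of_lt hyx (h hK)

lemma leftD (K lam a b c : ℝ) (hab : a < b) (hbc : b < c) (hD : LtDK K (c - b))
    (f : ℝ → ℝ) (hb0 : f b = 0) (hc0 : f c = 0)
    (H : ∀ t₁ ∈ Icc a b, ∀ t₂ ∈ Icc a b ∪ {c}, ∀ t₃ ∈ Icc a b ∪ {c},
      t₁ < t₂ → t₂ < t₃ → LtDK K (t₃ - t₁) →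
      ∀ g : ℝ → ℝ, IsSol K lam g → g t₁ = f t₁ → g t₃ = f t₃ → g t₂ ≤ f t₂) :
    ∃ db, HasDerivWithinAt f db (Icc a b) b ∧
      ∀ g, IsSol K lam g → g b = 0 → g c = 0 → deriv g b ≤ db := by
  obtain ⟨w, hwa, hwb, hwD⟩ : ∃ w, a ≤ w ∧ w < b ∧ LtDK K (c - w) := by
    by_cases hK : K < 0
    · have hDK := hD hK
      refine ⟨max a (b - (Real.pi / Real.sqrt (-K) - (c - b))/2), le_max_left _ _, ?_, ?_⟩
      · apply max_lt hab
        linarith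
      · intro hK2
        have h1 : b - (Real.pi / Real.sqrt (-K) - (c - b))/2 ≤
            max a (b - (Real.pi / Real.sqrt (-K) - (c - b))/2) := le_max_right _ _
        linarith
    · exact ⟨a, le_refl a, hab, fun hK2 => absurd hK2 hK⟩
  obtain ⟨C, hsub⟩ := chart_exists K lam w c (hwb.trans hbc) hwD
  have hwU : w ∈ C.U := hsub ⟨le_refl w, (hwb.trans hbc).le⟩
  have hbU : b ∈ C.U := hsub ⟨hwb.le, hbc.le⟩
  have hcU : c ∈ C.U := hsub ⟨(hwb.trans hbc).le, le_refl c⟩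
  have hxwb : C.φ w < C.φ b := C.mono hwU hbU hwb
  have hxbc : C.φ b < C.φ c := C.mono hbU hcU hbc
  have hsubwb : Icc w b ⊆ C.U := fun t ht => hsub ⟨ht.1, ht.2.trans hbc.le⟩
  have hconc : ConcaveOn ℝ (Icc (C.φ w) (C.φ b)) (C.V f) := by
    apply C.super_to_concave f hwb hsubwb
    intro s₁ hs₁ s₂ hs₂ hs g hg hg1 hg2 t ht
    rcases eq_or_lt_of_le ht.1 with h1 | h1
    · rw [← h1]; exact le_of_eq hg1
    rcases eq_or_lt_of_le ht.2 with h2 | h2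
    · rw [h2]; exact le_of_eq hg2
    exact H s₁ ⟨hwa.trans hs₁.1, hs₁.2⟩ t
      (mem_union_left _ ⟨hwa.trans (hs₁.1.trans ht.1), h2.le.trans hs₂.2⟩)
      s₂ (mem_union_left _ ⟨hwa.trans hs₂.1, hs₂.2⟩) h1 h2
      (C.hDK s₁ (hsubwb hs₁) s₂ (hsubwb hs₂)) g hg hg1 hg2
  have hcross : ∀ t ∈ Ico w b,
      (C.V f (C.φ c) - C.V f (C.φ b))/(C.φ c - C.φ b)
        ≤ (C.V f (C.φ b) - C.V f (C.φ t))/(C.φ b - C.φ t) := by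
    intro t ht
    have htU : t ∈ C.U := hsub ⟨ht.1, (ht.2.trans hbc).le⟩
    have hxtb : C.φ t < C.φ b := C.mono htU hbU ht.2
    have hxtc : C.φ t < C.φ c := hxtb.trans hxbc
    set A := (C.V f (C.φ c) - C.V f (C.φ t))/(C.φ c - C.φ t) with hA
    set B := C.V f (C.φ t) - A * C.φ t with hB
    obtain ⟨g, hg, hgrep⟩ := C.l2g A B
    have hVxt : C.V f (C.φ t) = A * C.φ t + B := by rw [hB]; ring
    have hVxc : C.V f (C.φ c) = A * C.φ c + B := by
      rw [hB, hA]
      have hne : C.φ c - C.φ t ≠ 0 := sub_ne_zero.2 (ne_of_gt hxtc)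
      field_simp
      ring
    have hval : ∀ s, s ∈ C.U → C.V f (C.φ s) = A * C.φ s + B → g s = f s := by
      intro s hsU hVs
      rw [hgrep s hsU, ← hVs, C.Vφ f hsU]
      field_simp [ne_of_gt (C.hm s hsU)]
      ring
    have hgt : g t = f t := hval t htU hVxt
    have hgc : g c = f c := hval c hcU hVxc
    have hgb : g b ≤ f b := H t ⟨hwa.trans ht.1, ht.2.le⟩
      b (mem_union_left _ (right_mem_Icc.2 hab.le)) c (mem_union_right _ rfl)
      ht.2 hbc (LtDK_mono hwD (by linarith [ht.1])) g hg hgt hgc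
    have hgbval : g b = C.m b * (A * C.φ b + B) + C.p b := hgrep b hbU
    have hAb : A * C.φ b + B ≤ C.V f (C.φ b) := by
      rw [C.Vφ f hbU, le_div_iff₀ (C.hm b hbU)]
      nlinarith [hgb, hgbval, hb0]
    have h1 : (C.V f (C.φ c) - C.V f (C.φ b))/(C.φ c - C.φ b) ≤ A := by
      rw [div_le_iff₀ (by linarith)]
      nlinarith [hAb, hVxc]
    have h2 : A ≤ (C.V f (C.φ b) - C.V f (C.φ t))/(C.φ b - C.φ t) := by
      rw [le_div_iff₀ (by linarith)]
      nlinarith [hAb, hVxt]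
    linarith
  set σ : ℝ → ℝ := fun s => (C.V f (C.φ b) - C.V f s)/(C.φ b - s) with hσ
  set A₀ := (C.V f (C.φ c) - C.V f (C.φ b))/(C.φ c - C.φ b) with hA₀
  have hσcross : ∀ s ∈ Ico (C.φ w) (C.φ b), A₀ ≤ σ s := by
    intro s hs
    obtain ⟨t, ht, hφt⟩ := C.surj hwb.le hsubwb s ⟨hs.1, hs.2.le⟩
    have htb : t < b := by
      have h5 := hs.2
      rw [← hφt] at h5
      exact (C.mono.lt_iff_lt (hsubwb ht) hbU).1 h5
    have h6 := hcross t ⟨ht.1, htb⟩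
    rw [hφt] at h6
    exact h6
  have hσanti : ∀ s ∈ Ico (C.φ w) (C.φ b), ∀ s' ∈ Ico (C.φ w) (C.φ b), s ≤ s' → σ s' ≤ σ s := by
    intro s hs s' hs' hss
    rcases eq_or_lt_of_le hss with h | h
    · rw [h]
    · exact (concave_slope3 hconc ⟨hs.1, hs.2.le⟩ (right_mem_Icc.2 hxwb.le) h hs'.2).1
  have hSne : (σ '' (Ico (C.φ w) (C.φ b))).Nonempty := ⟨σ (C.φ w), ⟨C.φ w, ⟨le_refl _, hxwb⟩, rfl⟩⟩
  have hSbdd : BddBelow (σ '' (Ico (C.φ w) (C.φ b))) := by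
    refine ⟨A₀, ?_⟩
    rintro v ⟨s, hs, rfl⟩
    exact hσcross s hs
  set L := sInf (σ '' (Ico (C.φ w) (C.φ b))) with hL
  have hLA₀ : A₀ ≤ L := by
    apply le_csInf hSne
    rintro v ⟨s, hs, rfl⟩
    exact hσcross s hs
  have htend : Filter.Tendsto σ (nhdsWithin (C.φ b) (Iio (C.φ b))) (nhds L) := by
    rw [tendsto_order]
    constructor
    · intro v hv
      refine Filter.eventually_iff_exists_mem.2 ⟨Ioo (C.φ w) (C.φ b),
        Ioo_mem_nhdsLT_of_mem ⟨hxwb, le_refl _⟩, ?_⟩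
      intro s hs
      have hLσ : L ≤ σ s := csInf_le hSbdd ⟨s, ⟨hs.1.le, hs.2⟩, rfl⟩
      linarith
    · intro v hv
      obtain ⟨v₀, ⟨s₀, hs₀, rfl⟩, hv₀⟩ := exists_lt_of_csInf_lt hSne hv
      refine Filter.eventually_iff_exists_mem.2 ⟨Ioo s₀ (C.φ b),
        Ioo_mem_nhdsLT_of_mem ⟨hs₀.2, le_refl _⟩, ?_⟩
      intro s hs
      exact lt_of_le_of_lt (hσanti s₀ hs₀ s ⟨hs₀.1.trans hs.1.le, hs.2⟩ hs.1.le) hv₀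
  have hderV : HasDerivWithinAt (C.V f) L (Icc (C.φ w) (C.φ b)) (C.φ b) := by
    rw [hasDerivWithinAt_iff_tendsto_slope, Icc_sdiff_right,
      nhdsWithin_Ico_eq_nhdsLT hxwb]
    refine Filter.Tendsto.congr' ?_ htend
    filter_upwards [self_mem_nhdsWithin] with s hs
    exact (slope_eq s (ne_of_lt hs)).symm
  have hderf : HasDerivWithinAt f
      (C.mq b * C.V f (C.φ b) + C.m b * (L * C.φq b) + C.pq b) (Icc w b) b :=
    C.deriv_transfer_bwd f hwb.le hsubwb (right_mem_Icc.2 hwb.le) hderV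
  have hderf2 : HasDerivWithinAt f
      (C.mq b * C.V f (C.φ b) + C.m b * (L * C.φq b) + C.pq b) (Icc a b) b := by
    refine hderf.mono_of_mem_nhdsWithin (mem_nhdsWithin.2 ⟨Ioi w, isOpen_Ioi, hwb, ?_⟩)
    rintro t ⟨h1, h2⟩
    exact ⟨le_of_lt h1, h2.2⟩
  refine ⟨_, hderf2, ?_⟩
  intro g hg hgb hgc
  obtain ⟨A', B', hgrep⟩ := C.g2l g hg
  have hAxb : A' * C.φ b + B' = C.V f (C.φ b) := by
    have h7 := hgrep b hbU
    rw [hgb] at h7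
    rw [C.Vφ f hbU, hb0, eq_div_iff (ne_of_gt (C.hm b hbU))]
    nlinarith [h7, C.hm b hbU]
  have hAxc : A' * C.φ c + B' = C.V f (C.φ c) := by
    have h7 := hgrep c hcU
    rw [hgc] at h7
    rw [C.Vφ f hcU, hc0, eq_div_iff (ne_of_gt (C.hm c hcU))]
    nlinarith [h7, C.hm c hcU]
  have hA'A₀ : A' = A₀ := by
    rw [hA₀, ← hAxb, ← hAxc, eq_div_iff (sub_ne_zero.2 (ne_of_gt hxbc))]
    ring
  have hd := C.sol_deriv hgrep hbU
  rw [hd, hAxb]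
  have key : C.m b * (A' * C.φq b) ≤ C.m b * (L * C.φq b) := by
    apply mul_le_mul_of_nonneg_left _ (C.hm b hbU).le
    apply mul_le_mul_of_nonneg_right _ (C.hφq b hbU).le
    rw [hA'A₀]
    exact hLA₀
  linarith

lemma sol_neg {K lam : ℝ} {g : ℝ → ℝ} (hg : IsSol K lam g) : IsSol K lam (fun t => g (-t)) := by
  have hd : ∀ t, HasDerivAt (fun s => g (-s)) (deriv g (-t) * (-1)) t := fun t =>
    ((hg.1 (-t)).hasDerivAt).comp t (hasDerivAt_neg t)
  have hd' : deriv (fun s => g (-s)) = fun t => deriv g (-t) * (-1) :=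
    funext fun t => (hd t).deriv
  refine ⟨fun t => (hd t).differentiableAt, ?_⟩
  intro t
  rw [hd']
  have h2 : HasDerivAt (fun s => deriv g (-s) * (-1)) ((K * g (-t) + lam) * (-1) * (-1)) t :=
    ((hg.2 (-t)).comp t (hasDerivAt_neg t)).mul_const (-1)
  convert h2 using 1
  show K * g (-t) + lam = (K * g (-t) + lam) * (-1) * (-1)
  ring

lemma derivCompNeg {g : ℝ → ℝ} (hg : Differentiable ℝ g) (t : ℝ) :
    deriv (fun s => g (-s)) t = deriv g (-t) * (-1) :=
  (((hg (-t)).hasDerivAt).comp t (hasDerivAt_neg t)).deriv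

lemma rightD (K lam b c d : ℝ) (hbc : b < c) (hcd : c < d) (hD : LtDK K (c - b))
    (f : ℝ → ℝ) (hb0 : f b = 0) (hc0 : f c = 0)
    (H : ∀ t₁ ∈ ({b} : Set ℝ) ∪ Icc c d, ∀ t₂ ∈ ({b} : Set ℝ) ∪ Icc c d, ∀ t₃ ∈ Icc c d,
      t₁ < t₂ → t₂ < t₃ → LtDK K (t₃ - t₁) →
      ∀ g : ℝ → ℝ, IsSol K lam g → g t₁ = f t₁ → g t₃ = f t₃ → g t₂ ≤ f t₂) :
    ∃ dc, HasDerivWithinAt f dc (Icc c d) c ∧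
      ∀ g, IsSol K lam g → g b = 0 → g c = 0 → dc ≤ deriv g c := by
  set ftil : ℝ → ℝ := fun t => f (-t) with hftil
  have Htil : ∀ t₁ ∈ Icc (-d) (-c), ∀ t₂ ∈ Icc (-d) (-c) ∪ {-b}, ∀ t₃ ∈ Icc (-d) (-c) ∪ {-b},
      t₁ < t₂ → t₂ < t₃ → LtDK K (t₃ - t₁) →
      ∀ g : ℝ → ℝ, IsSol K lam g → g t₁ = ftil t₁ → g t₃ = ftil t₃ → g t₂ ≤ ftil t₂ := by
    intro t₁ h₁ t₂ h₂ t₃ h₃ h12 h23 hDK g hg hg1 hg3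
    have conv : ∀ s, s ∈ Icc (-d) (-c) ∪ ({-b} : Set ℝ) → -s ∈ ({b} : Set ℝ) ∪ Icc c d := by
      rintro s (hs | hs)
      · exact mem_union_right _ ⟨by linarith [hs.2], by linarith [hs.1]⟩
      · rw [mem_singleton_iff] at hs
        rw [hs]
        exact mem_union_left _ (by simp)
    have h₁' : -t₁ ∈ Icc c d := ⟨by linarith [h₁.2], by linarith [h₁.1]⟩
    have key := H (-t₃) (conv t₃ h₃) (-t₂) (conv t₂ h₂) (-t₁) h₁'
      (by linarith) (by linarith) (by rw [show -t₁ - -t₃ = t₃ - t₁ from by ring]; exact hDK)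
      (fun s => g (-s)) (sol_neg hg)
      (by simp only [neg_neg]; exact hg3) (by simp only [neg_neg]; exact hg1)
    simpa using key
  obtain ⟨db, hder, hcond⟩ := leftD K lam (-d) (-c) (-b) (by linarith) (by linarith)
    (by rw [show -b - -c = c - b from by ring]; exact hD) ftil
    (by show ftil (-c) = 0; simp only [hftil]; rw [neg_neg]; exact hc0)
    (by show ftil (-b) = 0; simp only [hftil]; rw [neg_neg]; exact hb0) Htil
  refine ⟨-db, ?_, ?_⟩
  · have h₁ : HasDerivWithinAt (fun s : ℝ => -s) (-1) (Icc c d) c :=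
      (hasDerivAt_neg c).hasDerivWithinAt
    have hmaps : MapsTo (fun s : ℝ => -s) (Icc c d) (Icc (-d) (-c)) := by
      intro t ht
      have h1' := ht.1
      have h2' := ht.2
      show -t ∈ Icc (-d) (-c)
      exact ⟨by linarith, by linarith⟩
    have hcomp := HasDerivWithinAt.comp c
      (by show HasDerivWithinAt ftil db (Icc (-d) (-c)) (-c); exact hder) h₁ hmaps
    have : HasDerivWithinAt f (db * (-1)) (Icc c d) c := by
      refine hcomp.congr ?_ ?_
      · intro y _
        show f y = ftil (-y)
        rw [hftil]
        simp
      · show f c = ftil (-c)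
        rw [hftil]
        simp
    simpa using this
  · intro g hg hgb hgc
    have := hcond (fun s => g (-s)) (sol_neg hg) (by simpa using hgc) (by simpa using hgb)
    rw [derivCompNeg hg.1 (-c)] at this
    simp only [neg_neg] at this
    linarith

lemma big1 (K lam a b c d : ℝ) (hab : a < b) (hbc : b < c) (hcd : c < d) (hD : LtDK K (c - b))
    (f : ℝ → ℝ) (hb0 : f b = 0) (hc0 : f c = 0)
    (Hi : ∀ t₁ ∈ Icc a b ∪ Icc c d, ∀ t₂ ∈ Icc a b ∪ Icc c d, ∀ t₃ ∈ Icc a b ∪ Icc c d,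
      t₁ < t₂ → t₂ < t₃ → LtDK K (t₃ - t₁) → JensenSuperIneq K lam f t₁ t₂ t₃) :
    JensenSuper K lam f (Icc a b) ∧ JensenSuper K lam f (Icc c d) ∧
      ∃ db dc : ℝ, HasDerivWithinAt f db (Icc a b) b ∧ HasDerivWithinAt f dc (Icc c d) c ∧
        ∀ g : ℝ → ℝ, IsSol K lam g → g b = 0 → g c = 0 →
          deriv g b ≤ db ∧ dc ≤ deriv g c := by
  have piece : ∀ s : Set ℝ, s ⊆ Icc a b ∪ Icc c d → s.OrdConnected → JensenSuper K lam f s := by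
    intro s hs hconn t₁ h₁ t₂ h₂ hlt hDK g hg hg1 hg2 t ht
    rcases eq_or_lt_of_le ht.1 with h | h
    · rw [← h]; exact le_of_eq hg1
    rcases eq_or_lt_of_le ht.2 with h' | h'
    · rw [h']; exact le_of_eq hg2
    exact Hi t₁ (hs h₁) t (hs (hconn.out h₁ h₂ ht)) t₂ (hs h₂) h h' hDK g hg hg1 hg2
  have convL : Icc a b ∪ ({c} : Set ℝ) ⊆ Icc a b ∪ Icc c d := by
    rintro s (hs | hs)
    · exact mem_union_left _ hs
    · rw [mem_singleton_iff] at hs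
      rw [hs]
      exact mem_union_right _ ⟨le_refl c, hcd.le⟩
  have convR : ({b} : Set ℝ) ∪ Icc c d ⊆ Icc a b ∪ Icc c d := by
    rintro s (hs | hs)
    · rw [mem_singleton_iff] at hs
      rw [hs]
      exact mem_union_left _ ⟨hab.le, le_refl b⟩
    · exact mem_union_right _ hs
  obtain ⟨db, hdb, hdbc⟩ := leftD K lam a b c hab hbc hD f hb0 hc0
    (fun t₁ h₁ t₂ h₂ t₃ h₃ h12 h23 hDK =>
      Hi t₁ (mem_union_left _ h₁) t₂ (convL h₂) t₃ (convL h₃) h12 h23 hDK)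
  obtain ⟨dc, hdc, hdcc⟩ := rightD K lam b c d hbc hcd hD f hb0 hc0
    (fun t₁ h₁ t₂ h₂ t₃ h₃ h12 h23 hDK =>
      Hi t₁ (convR h₁) t₂ (convR h₂) t₃ (mem_union_right _ h₃) h12 h23 hDK)
  exact ⟨piece (Icc a b) subset_union_left ordConnected_Icc,
    piece (Icc c d) subset_union_right ordConnected_Icc,
    db, dc, hdb, hdc, fun g hg h1 h2 => ⟨hdbc g hg h1 h2, hdcc g hg h1 h2⟩⟩

lemma concave_of_affine_on {u : ℝ → ℝ} {s : Set ℝ} (hconv : Convex ℝ s) {A B : ℝ}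
    (h : ∀ x ∈ s, u x = A * x + B) : ConcaveOn ℝ s u := by
  rw [concaveOn_iff_slope_anti_adjacent]
  refine ⟨hconv, ?_⟩
  intro x y z hx hz hxy hyz
  have hy : y ∈ s := hconv.ordConnected.out hx hz ⟨hxy.le, hyz.le⟩
  rw [h x hx, h y hy, h z hz]
  have e1 : (A * z + B - (A * y + B))/(z - y) = A := by
    rw [div_eq_iff (sub_ne_zero.2 (ne_of_gt hyz))]; ring
  have e2 : (A * y + B - (A * x + B))/(y - x) = A := by
    rw [div_eq_iff (sub_ne_zero.2 (ne_of_gt hxy))]; ring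
  rw [e1, e2]

lemma contOn_union_closed {F : ℝ → ℝ} {s t : Set ℝ} (hs : IsClosed s) (ht : IsClosed t)
    (h1 : ContinuousOn F s) (h2 : ContinuousOn F t) : ContinuousOn F (s ∪ t) := by
  intro x hx
  have hws : ContinuousWithinAt F s x := by
    by_cases h : x ∈ s
    · exact h1 x h
    · exact continuousWithinAt_of_notMem_closure (by rwa [hs.closure_eq])
  have hwt : ContinuousWithinAt F t x := by
    by_cases h : x ∈ t
    · exact h2 x h
    · exact continuousWithinAt_of_notMem_closure (by rwa [ht.closure_eq])
  exact hws.union hwt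

lemma affine_hasDerivAt (A B x : ℝ) : HasDerivAt (fun s => A * s + B) A x := by
  simpa using ((hasDerivAt_id x).const_mul A).add_const B

lemma big2 (K lam a b c d : ℝ) (hab : a < b) (hbc : b < c) (hcd : c < d)
    (hD : LtDK K (c - b)) (f : ℝ → ℝ) (hf : ContinuousOn f (Icc a b ∪ Icc c d))
    (hb0 : f b = 0) (hc0 : f c = 0)
    (hs1 : JensenSuper K lam f (Icc a b)) (hs2 : JensenSuper K lam f (Icc c d))
    (db dc : ℝ) (hdb : HasDerivWithinAt f db (Icc a b) b)
    (hdc : HasDerivWithinAt f dc (Icc c d) c)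
    (hcmp : ∀ g, IsSol K lam g → g b = 0 → g c = 0 → deriv g b ≤ db ∧ dc ≤ deriv g c) :
    ∃ F : ℝ → ℝ, ContinuousOn F (Icc a d) ∧ (∀ t ∈ Icc a b ∪ Icc c d, F t = f t) ∧
      JensenSuper K lam F (Icc a d) := by
  obtain ⟨g₀, hg₀, hg₀b, hg₀c⟩ : ∃ g₀, IsSol K lam g₀ ∧ g₀ b = 0 ∧ g₀ c = 0 := by
    obtain ⟨C, hsub⟩ := chart_exists K lam b c hbc hD
    have hbU : b ∈ C.U := hsub (left_mem_Icc.2 hbc.le)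
    have hcU : c ∈ C.U := hsub (right_mem_Icc.2 hbc.le)
    have hφbc : C.φ b < C.φ c := C.mono hbU hcU hbc
    have hne : C.φ c - C.φ b ≠ 0 := sub_ne_zero.2 (ne_of_gt hφbc)
    obtain ⟨g, hg, hrep⟩ := C.l2g
      (((-C.p c)/C.m c - (-C.p b)/C.m b)/(C.φ c - C.φ b))
      ((-C.p b)/C.m b - (((-C.p c)/C.m c - (-C.p b)/C.m b)/(C.φ c - C.φ b)) * C.φ b)
    have hAc : ((-C.p c)/C.m c - (-C.p b)/C.m b)/(C.φ c - C.φ b) * (C.φ c - C.φ b)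
        = (-C.p c)/C.m c - (-C.p b)/C.m b := div_mul_cancel₀ _ hne
    refine ⟨g, hg, ?_, ?_⟩
    · rw [hrep b hbU]
      have hb' : ((-C.p c)/C.m c - (-C.p b)/C.m b)/(C.φ c - C.φ b) * C.φ b +
          ((-C.p b)/C.m b - (((-C.p c)/C.m c - (-C.p b)/C.m b)/(C.φ c - C.φ b)) * C.φ b)
          = (-C.p b)/C.m b := by ring
      rw [hb', mul_comm, div_mul_cancel₀ _ (ne_of_gt (C.hm b hbU))]
      ring
    · rw [hrep c hcU]
      have hc' : ((-C.p c)/C.m c - (-C.p b)/C.m b)/(C.φ c - C.φ b) * C.φ c +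
          ((-C.p b)/C.m b - (((-C.p c)/C.m c - (-C.p b)/C.m b)/(C.φ c - C.φ b)) * C.φ b)
          = (-C.p c)/C.m c := by linear_combination hAc
      rw [hc', mul_comm, div_mul_cancel₀ _ (ne_of_gt (C.hm c hcU))]
      ring
  set F : ℝ → ℝ := fun t => if b ≤ t ∧ t ≤ c then g₀ t else f t with hF
  have hFab : ∀ t ∈ Icc a b, F t = f t := by
    intro t ht
    rw [hF]
    simp only
    by_cases h : b ≤ t ∧ t ≤ c
    · have ht' : t = b := le_antisymm ht.2 h.1
      rw [if_pos h, ht', hg₀b, hb0]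
    · rw [if_neg h]
  have hFcd : ∀ t ∈ Icc c d, F t = f t := by
    intro t ht
    rw [hF]
    simp only
    by_cases h : b ≤ t ∧ t ≤ c
    · have ht' : t = c := le_antisymm h.2 ht.1
      rw [if_pos h, ht', hg₀c, hc0]
    · rw [if_neg h]
  have hFbc : ∀ t ∈ Icc b c, F t = g₀ t := by
    intro t ht
    rw [hF]
    simp only
    rw [if_pos ⟨ht.1, ht.2⟩]
  have hFI : ∀ t ∈ Icc a b ∪ Icc c d, F t = f t := by
    rintro t (h | h)
    · exact hFab t h
    · exact hFcd t h
  have hcont : ContinuousOn F (Icc a d) := by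
    have c1 : ContinuousOn F (Icc a b) := (hf.mono subset_union_left).congr hFab
    have c2 : ContinuousOn F (Icc b c) := (hg₀.1.continuous.continuousOn).congr hFbc
    have c3 : ContinuousOn F (Icc c d) := (hf.mono subset_union_right).congr hFcd
    have h4 := contOn_union_closed isClosed_Icc isClosed_Icc c2 c3
    rw [Icc_union_Icc_eq_Icc hbc.le hcd.le] at h4
    have h5 := contOn_union_closed isClosed_Icc isClosed_Icc c1 h4
    rw [Icc_union_Icc_eq_Icc hab.le (hbc.le.trans hcd.le)] at h5
    exact h5
  refine ⟨F, hcont, hFI, ?_⟩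
  intro t₁ ht₁ t₂ ht₂ hlt hDK g hg hg1 hg2
  obtain ⟨C, hsub⟩ := chart_exists K lam t₁ t₂ hlt hDK
  obtain ⟨Ag, Bg, hgrep⟩ := C.g2l g₀ hg₀
  have concab : ∀ u v : ℝ, a ≤ u → u < v → v ≤ b → t₁ ≤ u → v ≤ t₂ →
      ConcaveOn ℝ (Icc (C.φ u) (C.φ v)) (C.V F) := by
    intro u v hau huv hvb ht1u hvt2
    have hsub' : Icc u v ⊆ C.U := fun s hs => hsub ⟨ht1u.trans hs.1, hs.2.trans hvt2⟩
    apply C.super_to_concave F huv hsub'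
    intro s₁ h₁ s₂ h₂ hs g' hg' hg1' hg2' t ht
    have hmem : ∀ s, s ∈ Icc s₁ s₂ → s ∈ Icc a b := fun s hs' =>
      ⟨hau.trans (h₁.1.trans hs'.1), (hs'.2.trans h₂.2).trans hvb⟩
    rw [hFI _ (mem_union_left _ (hmem t ht))]
    exact hs1 s₁ ⟨hau.trans h₁.1, h₁.2.trans hvb⟩ s₂ ⟨hau.trans h₂.1, h₂.2.trans hvb⟩ hs
      (C.hDK s₁ (hsub' h₁) s₂ (hsub' h₂)) g' hg'
      (by rw [hg1', hFI _ (mem_union_left _ (hmem s₁ ⟨le_refl _, hs.le⟩))])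
      (by rw [hg2', hFI _ (mem_union_left _ (hmem s₂ ⟨hs.le, le_refl _⟩))]) t ht
  have conccd : ∀ u v : ℝ, c ≤ u → u < v → v ≤ d → t₁ ≤ u → v ≤ t₂ →
      ConcaveOn ℝ (Icc (C.φ u) (C.φ v)) (C.V F) := by
    intro u v hcu huv hvd ht1u hvt2
    have hsub' : Icc u v ⊆ C.U := fun s hs => hsub ⟨ht1u.trans hs.1, hs.2.trans hvt2⟩
    apply C.super_to_concave F huv hsub'
    intro s₁ h₁ s₂ h₂ hs g' hg' hg1' hg2' t ht
    have hmem : ∀ s, s ∈ Icc s₁ s₂ → s ∈ Icc c d := fun s hs' =>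
      ⟨hcu.trans (h₁.1.trans hs'.1), (hs'.2.trans h₂.2).trans hvd⟩
    rw [hFI _ (mem_union_right _ (hmem t ht))]
    exact hs2 s₁ ⟨hcu.trans h₁.1, h₁.2.trans hvd⟩ s₂ ⟨hcu.trans h₂.1, h₂.2.trans hvd⟩ hs
      (C.hDK s₁ (hsub' h₁) s₂ (hsub' h₂)) g' hg'
      (by rw [hg1', hFI _ (mem_union_right _ (hmem s₁ ⟨le_refl _, hs.le⟩))])
      (by rw [hg2', hFI _ (mem_union_right _ (hmem s₂ ⟨hs.le, le_refl _⟩))]) t ht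
  have haff : ∀ u v : ℝ, b ≤ u → u ≤ v → v ≤ c → t₁ ≤ u → v ≤ t₂ →
      ∀ s ∈ Icc (C.φ u) (C.φ v), C.V F s = Ag * s + Bg := by
    intro u v hbu huv hvc ht1u hvt2
    have hsub' : Icc u v ⊆ C.U := fun s hs => hsub ⟨ht1u.trans hs.1, hs.2.trans hvt2⟩
    apply C.Vaff F huv hsub'
    intro t ht
    rw [hFbc t ⟨hbu.trans ht.1, ht.2.trans hvc⟩]
    exact hgrep t (hsub' ht)
  have haffd : ∀ u v x₀ : ℝ, b ≤ u → u ≤ x₀ → x₀ ≤ v → v ≤ c → t₁ ≤ u → v ≤ t₂ →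
      HasDerivWithinAt (C.V F) Ag (Icc (C.φ u) (C.φ v)) (C.φ x₀) := by
    intro u v x₀ hbu hux hxv hvc ht1u hvt2
    have hsub' : Icc u v ⊆ C.U := fun s hs => hsub ⟨ht1u.trans hs.1, hs.2.trans hvt2⟩
    have h1 : HasDerivWithinAt (fun s => Ag * s + Bg) Ag (Icc (C.φ u) (C.φ v)) (C.φ x₀) :=
      (affine_hasDerivAt Ag Bg _).hasDerivWithinAt
    exact h1.congr (fun s hs => haff u v hbu (hux.trans hxv) hvc ht1u hvt2 s hs)
      (haff u v hbu (hux.trans hxv) hvc ht1u hvt2 (C.φ x₀) (C.mapsToφ hsub' ⟨hux, hxv⟩))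
  have jb : t₁ < b → b < t₂ →
      ∃ Lb, HasDerivWithinAt (C.V F) Lb (Icc (C.φ t₁) (C.φ b)) (C.φ b) ∧ Ag ≤ Lb := by
    intro h3 h1'
    have hbU : b ∈ C.U := hsub ⟨h3.le, h1'.le⟩
    have hsubt1b : Icc t₁ b ⊆ C.U := fun s hs => hsub ⟨hs.1, hs.2.trans h1'.le⟩
    have hFdb : HasDerivWithinAt F db (Icc a b) b :=
      hdb.congr (fun y hy => hFab y hy) (hFab b (right_mem_Icc.2 hab.le))
    have hFdb2 : HasDerivWithinAt F db (Icc t₁ b) b :=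
      hFdb.mono (Icc_subset_Icc ht₁.1 (le_refl _))
    have hV := C.deriv_transfer_fwd F h3.le hsubt1b (right_mem_Icc.2 h3.le) hFdb2
    refine ⟨_, hV, ?_⟩
    have hgd := C.sol_deriv hgrep hbU
    have hble := (hcmp g₀ hg₀ hg₀b hg₀c).1
    rw [hgd] at hble
    have hb' : Ag * C.φ b + Bg = (F b - C.p b)/C.m b := by
      rw [hFbc b ⟨le_refl b, hbc.le⟩, hgrep b hbU, add_sub_cancel_right,
        mul_div_cancel_left₀ _ (ne_of_gt (C.hm b hbU))]
    rw [hb'] at hble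
    set vb := (F b - C.p b)/C.m b with hvbdef
    have hvb : F b - C.p b = vb * C.m b :=
      (div_mul_cancel₀ _ (ne_of_gt (C.hm b hbU))).symm
    rw [hvb, ← div_eq_mul_inv, div_div, le_div_iff₀
      (by have h5 := C.hm b hbU; have h6 := C.hφq b hbU; positivity)]
    nlinarith [mul_le_mul_of_nonneg_left hble (C.hm b hbU).le]
  have jc : t₁ < c → c < t₂ →
      ∃ Rc, HasDerivWithinAt (C.V F) Rc (Icc (C.φ c) (C.φ t₂)) (C.φ c) ∧ Rc ≤ Ag := by
    intro h3 h1'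
    have hcU : c ∈ C.U := hsub ⟨h3.le, h1'.le⟩
    have hsubct2 : Icc c t₂ ⊆ C.U := fun s hs => hsub ⟨h3.le.trans hs.1, hs.2⟩
    have hFdc : HasDerivWithinAt F dc (Icc c d) c :=
      hdc.congr (fun y hy => hFcd y hy) (hFcd c (left_mem_Icc.2 hcd.le))
    have hFdc2 : HasDerivWithinAt F dc (Icc c t₂) c :=
      hFdc.mono (Icc_subset_Icc (le_refl _) ht₂.2)
    have hV := C.deriv_transfer_fwd F h1'.le hsubct2 (left_mem_Icc.2 h1'.le) hFdc2
    refine ⟨_, hV, ?_⟩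
    have hgd := C.sol_deriv hgrep hcU
    have hble := (hcmp g₀ hg₀ hg₀b hg₀c).2
    rw [hgd] at hble
    have hc' : Ag * C.φ c + Bg = (F c - C.p c)/C.m c := by
      rw [hFbc c ⟨hbc.le, le_refl c⟩, hgrep c hcU, add_sub_cancel_right,
        mul_div_cancel_left₀ _ (ne_of_gt (C.hm c hcU))]
    rw [hc'] at hble
    set vc := (F c - C.p c)/C.m c with hvcdef
    have hvc : F c - C.p c = vc * C.m c :=
      (div_mul_cancel₀ _ (ne_of_gt (C.hm c hcU))).symm
    rw [hvc, ← div_eq_mul_inv, div_div, div_le_iff₀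
      (by have h5 := C.hm c hcU; have h6 := C.hφq c hcU; positivity)]
    nlinarith [mul_le_mul_of_nonneg_left hble (C.hm c hcU).le]
  have hconc : ConcaveOn ℝ (Icc (C.φ t₁) (C.φ t₂)) (C.V F) := by
    rcases le_or_gt t₂ b with hc1 | hc1
    · exact concab t₁ t₂ ht₁.1 hlt hc1 (le_refl _) (le_refl _)
    rcases le_or_gt c t₁ with hc2 | hc2
    · exact conccd t₁ t₂ hc2 hlt ht₂.2 (le_refl _) (le_refl _)
    rcases le_or_gt b t₁ with hc3 | hc3
    · rcases le_or_gt t₂ c with hc4 | hc4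
      · exact concave_of_affine_on (convex_Icc _ _)
          (haff t₁ t₂ hc3 hlt.le hc4 (le_refl _) (le_refl _))
      · -- glue at c
        obtain ⟨Rc, hdRc, hRcAg⟩ := jc hc2 hc4
        have hcU : c ∈ C.U := hsub ⟨hc2.le, hc4.le⟩
        have ht₁U : t₁ ∈ C.U := hsub (left_mem_Icc.2 hlt.le)
        have ht₂U : t₂ ∈ C.U := hsub (right_mem_Icc.2 hlt.le)
        exact concave_glue (C.mono ht₁U hcU hc2) (C.mono hcU ht₂U hc4)
          (concave_of_affine_on (convex_Icc _ _)
            (haff t₁ c hc3 hc2.le (le_refl _) (le_refl _) hc4.le))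
          (conccd c t₂ (le_refl _) hc4 ht₂.2 hc2.le (le_refl _))
          (haffd t₁ c c hc3 hc2.le (le_refl _) (le_refl _) (le_refl _) hc4.le)
          hdRc hRcAg
    · rcases le_or_gt t₂ c with hc4 | hc4
      · -- glue at b
        obtain ⟨Lb, hdLb, hAgLb⟩ := jb hc3 hc1
        have hbU : b ∈ C.U := hsub ⟨hc3.le, hc1.le⟩
        have ht₁U : t₁ ∈ C.U := hsub (left_mem_Icc.2 hlt.le)
        have ht₂U : t₂ ∈ C.U := hsub (right_mem_Icc.2 hlt.le)
        exact concave_glue (C.mono ht₁U hbU hc3) (C.mono hbU ht₂U hc1)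
          (concab t₁ b ht₁.1 hc3 (le_refl _) (le_refl _) hc1.le)
          (concave_of_affine_on (convex_Icc _ _)
            (haff b t₂ (le_refl _) hc1.le hc4 hc3.le (le_refl _)))
          hdLb
          (haffd b t₂ b (le_refl _) (le_refl _) hc1.le hc4 hc3.le (le_refl _))
          hAgLb
      · -- double glue : t₁ < b < c < t₂
        obtain ⟨Lb, hdLb, hAgLb⟩ := jb hc3 hc1
        obtain ⟨Rc, hdRc, hRcAg⟩ := jc hc2 hc4
        have hbU : b ∈ C.U := hsub ⟨hc3.le, hc1.le⟩
        have hcU : c ∈ C.U := hsub ⟨hc2.le, hc4.le⟩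
        have ht₁U : t₁ ∈ C.U := hsub (left_mem_Icc.2 hlt.le)
        have ht₂U : t₂ ∈ C.U := hsub (right_mem_Icc.2 hlt.le)
        have hφ1b : C.φ t₁ < C.φ b := C.mono ht₁U hbU hc3
        have hφbc2 : C.φ b < C.φ c := C.mono hbU hcU hbc
        have hφc2 : C.φ c < C.φ t₂ := C.mono hcU ht₂U hc4
        have hleft : ConcaveOn ℝ (Icc (C.φ t₁) (C.φ c)) (C.V F) :=
          concave_glue hφ1b hφbc2
            (concab t₁ b ht₁.1 hc3 (le_refl _) (le_refl _) hc1.le)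
            (concave_of_affine_on (convex_Icc _ _)
              (haff b c (le_refl _) hbc.le (le_refl _) hc3.le hc4.le))
            hdLb
            (haffd b c b (le_refl _) (le_refl _) hbc.le (le_refl _) hc3.le hc4.le)
            hAgLb
        have hdleft : HasDerivWithinAt (C.V F) Ag (Icc (C.φ t₁) (C.φ c)) (C.φ c) := by
          have h8 := haffd b c c (le_refl _) hbc.le (le_refl _) (le_refl _) hc3.le hc4.le
          refine h8.mono_of_mem_nhdsWithin (mem_nhdsWithin.2 ⟨Ioi (C.φ b), isOpen_Ioi, hφbc2, ?_⟩)
          rintro s ⟨hs1', hs2'⟩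
          exact ⟨le_of_lt hs1', hs2'.2⟩
        exact concave_glue (hφ1b.trans hφbc2) hφc2 hleft
          (conccd c t₂ (le_refl _) hc4 ht₂.2 hc2.le (le_refl _))
          hdleft hdRc hRcAg
  exact C.concave_to_chord F hlt hsub hconc hg hg1 hg2

lemma easy_dir (K lam a b c d : ℝ) (hab : a < b) (hbc : b < c) (hcd : c < d)
    (f : ℝ → ℝ)
    (hex : ∃ F : ℝ → ℝ, ContinuousOn F (Set.Icc a d) ∧
      (∀ t ∈ Set.Icc a b ∪ Set.Icc c d, F t = f t) ∧
      JensenSuper K lam F (Set.Icc a d)) :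
    ∀ t₁ ∈ Set.Icc a b ∪ Set.Icc c d, ∀ t₂ ∈ Set.Icc a b ∪ Set.Icc c d,
      ∀ t₃ ∈ Set.Icc a b ∪ Set.Icc c d,
      t₁ < t₂ → t₂ < t₃ → LtDK K (t₃ - t₁) → JensenSuperIneq K lam f t₁ t₂ t₃ := by
  obtain ⟨F, hFc, hFI, hFs⟩ := hex
  intro t₁ h₁ t₂ h₂ t₃ h₃ h12 h23 hDK g hg hg1 hg3
  have hsubI : Icc a b ∪ Icc c d ⊆ Icc a d := by
    rintro t (h | h)
    · exact ⟨h.1, h.2.trans (hbc.le.trans hcd.le)⟩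
    · exact ⟨(hab.le.trans hbc.le).trans h.1, h.2⟩
  have key := hFs t₁ (hsubI h₁) t₃ (hsubI h₃) (h12.trans h23) hDK g hg
    (by rw [hg1, hFI t₁ h₁]) (by rw [hg3, hFI t₃ h₃]) t₂ ⟨h12.le, h23.le⟩
  rw [hFI t₂ h₂] at key
  exact key

/-- split domain, supersolutions: for a continuous `f` on
`I = [a, b] ∪ [c, d]` with `f b = f c = 0` and `c - b < D_K`, the following are equivalent:
(i) `f` satisfies all Jensen supersolution inequalities with parameters in `I`;
(ii) `f` extends to a Jensen supersolution on `[a, d]`;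
(iii) `f` is a Jensen supersolution on both `[a, b]` and `[c, d]`, the one-sided derivatives
`f'(b⁻)`, `f'(c⁺)` exist and satisfy `f'(b⁻) ≥ g'(b)`, `f'(c⁺) ≤ g'(c)` for the unique
solution `g` of the ODE with `g b = g c = 0`. -/
theorem split_domain_super_equivalences
    (K lam a b c d : ℝ) (hab : a < b) (hbc : b < c) (hcd : c < d)
    (hD : LtDK K (c - b))
    (f : ℝ → ℝ) (hf : ContinuousOn f (Set.Icc a b ∪ Set.Icc c d))
    (hb0 : f b = 0) (hc0 : f c = 0) :
    ((∀ t₁ ∈ Set.Icc a b ∪ Set.Icc c d, ∀ t₂ ∈ Set.Icc a b ∪ Set.Icc c d,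
        ∀ t₃ ∈ Set.Icc a b ∪ Set.Icc c d,
        t₁ < t₂ → t₂ < t₃ → LtDK K (t₃ - t₁) → JensenSuperIneq K lam f t₁ t₂ t₃) ↔
      (∃ F : ℝ → ℝ, ContinuousOn F (Set.Icc a d) ∧
        (∀ t ∈ Set.Icc a b ∪ Set.Icc c d, F t = f t) ∧
        JensenSuper K lam F (Set.Icc a d))) ∧
    ((∀ t₁ ∈ Set.Icc a b ∪ Set.Icc c d, ∀ t₂ ∈ Set.Icc a b ∪ Set.Icc c d,
        ∀ t₃ ∈ Set.Icc a b ∪ Set.Icc c d,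
        t₁ < t₂ → t₂ < t₃ → LtDK K (t₃ - t₁) → JensenSuperIneq K lam f t₁ t₂ t₃) ↔
      (JensenSuper K lam f (Set.Icc a b) ∧ JensenSuper K lam f (Set.Icc c d) ∧
        ∃ db dc : ℝ,
          HasDerivWithinAt f db (Set.Icc a b) b ∧
          HasDerivWithinAt f dc (Set.Icc c d) c ∧
          ∀ g : ℝ → ℝ, IsSol K lam g → g b = 0 → g c = 0 →
            deriv g b ≤ db ∧ dc ≤ deriv g c)) := by
  constructor
  · constructor
    · intro Hi
      obtain ⟨h1, h2, db, dc, hdb, hdc, hcmp⟩ := big1 K lam a b c d hab hbc hcd hD f hb0 hc0 Hi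
      exact big2 K lam a b c d hab hbc hcd hD f hf hb0 hc0 h1 h2 db dc hdb hdc hcmp
    · exact easy_dir K lam a b c d hab hbc hcd f
  · constructor
    · intro Hi
      exact (big1 K lam a b c d hab hbc hcd hD f hb0 hc0 Hi)
    · rintro ⟨h1, h2, db, dc, hdb, hdc, hcmp⟩
      exact easy_dir K lam a b c d hab hbc hcd f
        (big2 K lam a b c d hab hbc hcd hD f hf hb0 hc0 h1 h2 db dc hdb hdc hcmp)
end

section
/- For every ω ∈ ℝ, the function f(t) = arccos(cosh(ω) · cos(t)) is concave on the interval [arccos(1/cosh(ω)), π/2]; in particular, at every interior point t of this interval it satisfies f''(t) = −(cosh(ω) cos(t) (cosh(ω)² − 1)) / (1 − cosh(ω)² cos(t)²)^{3/2} ≤ 0. -/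
open Set MeasureTheory

/-- For every `ω`, the function `t ↦ arccos(cosh ω · cos t)` is concave on
`[arccos(1 / cosh ω), π / 2]`, and at every interior point its second derivative equals
`-(cosh ω · cos t · (cosh ω ² - 1)) / √(1 - cosh ω ² cos t ²)³ ≤ 0`. -/
theorem arccos_cosh_cos_concave (ω : ℝ) :
    ConcaveOn ℝ (Set.Icc (Real.arccos (1 / Real.cosh ω)) (Real.pi / 2))
      (fun t => Real.arccos (Real.cosh ω * Real.cos t)) ∧
    ∀ t ∈ Set.Ioo (Real.arccos (1 / Real.cosh ω)) (Real.pi / 2),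
      deriv (deriv (fun t => Real.arccos (Real.cosh ω * Real.cos t))) t =
        -(Real.cosh ω * Real.cos t * (Real.cosh ω ^ 2 - 1)) /
          (Real.sqrt (1 - Real.cosh ω ^ 2 * Real.cos t ^ 2)) ^ 3 ∧
      deriv (deriv (fun t => Real.arccos (Real.cosh ω * Real.cos t))) t ≤ 0 := by
  set c := Real.cosh ω with hcdef
  have hc1 : 1 ≤ c := Real.one_le_cosh ω
  have hc0 : 0 < c := by linarith
  set a := Real.arccos (1 / c) with hadef
  set f : ℝ → ℝ := fun t => Real.arccos (c * Real.cos t) with hfdef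
  set g : ℝ → ℝ := fun t => c * Real.sin t / Real.sqrt (1 - c ^ 2 * Real.cos t ^ 2) with hgdef
  set F : ℝ → ℝ := fun t =>
    -(c * Real.cos t * (c ^ 2 - 1)) / (Real.sqrt (1 - c ^ 2 * Real.cos t ^ 2)) ^ 3 with hFdef
  have ha0 : 0 ≤ a := Real.arccos_nonneg _
  -- basic facts at interior points
  have hmem : ∀ t ∈ Set.Ioo a (Real.pi / 2),
      0 < Real.cos t ∧ c * Real.cos t < 1 := by
    intro t ht
    have ht1 : 0 < Real.cos t := by
      apply Real.cos_pos_of_mem_Ioo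
      constructor
      · have := Real.pi_pos; linarith [ht.1]
      · exact ht.2
    refine ⟨ht1, ?_⟩
    have hca : Real.cos a = 1 / c := by
      apply Real.cos_arccos
      · have : (0:ℝ) < 1 / c := by positivity
        linarith
      · rw [div_le_one hc0]; exact hc1
    have hlt : Real.cos t < Real.cos a := by
      apply Real.strictAntiOn_cos
      · exact ⟨ha0, (Real.arccos_le_pi _)⟩
      · constructor
        · linarith [ht.1]
        · have := Real.pi_pos; linarith [ht.2]
      · exact ht.1
    rw [hca] at hlt
    calc c * Real.cos t < c * (1 / c) := by
            exact (mul_lt_mul_iff_right₀ hc0).mpr hlt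
      _ = 1 := by field_simp
  have hpos : ∀ t ∈ Set.Ioo a (Real.pi / 2),
      0 < 1 - c ^ 2 * Real.cos t ^ 2 := by
    intro t ht
    obtain ⟨h1, h2⟩ := hmem t ht
    nlinarith [mul_pos hc0 h1]
  -- first derivative
  have hd1 : ∀ t ∈ Set.Ioo a (Real.pi / 2), HasDerivAt f (g t) t := by
    intro t ht
    obtain ⟨h1, h2⟩ := hmem t ht
    have hne1 : c * Real.cos t ≠ 1 := ne_of_lt h2
    have hnem1 : c * Real.cos t ≠ -1 := by nlinarith
    have hinner : HasDerivAt (fun t => c * Real.cos t) (c * (-Real.sin t)) t :=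
      (Real.hasDerivAt_cos t).const_mul c
    have h := (Real.hasDerivAt_arccos hnem1 hne1).comp t hinner
    have hEq : -(1 / Real.sqrt (1 - (c * Real.cos t) ^ 2)) * (c * (-Real.sin t)) = g t := by
      rw [hgdef]
      have : (c * Real.cos t) ^ 2 = c ^ 2 * Real.cos t ^ 2 := by ring
      rw [this]
      ring
    rw [hEq] at h
    exact h
  -- second derivative
  have hd2 : ∀ t ∈ Set.Ioo a (Real.pi / 2), HasDerivAt g (F t) t := by
    intro t ht
    obtain ⟨h1, h2⟩ := hmem t ht
    have hh : 0 < 1 - c ^ 2 * Real.cos t ^ 2 := hpos t ht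
    set s := Real.sqrt (1 - c ^ 2 * Real.cos t ^ 2) with hsdef
    have hs : 0 < s := Real.sqrt_pos.mpr hh
    have hs2 : s ^ 2 = 1 - c ^ 2 * Real.cos t ^ 2 := Real.sq_sqrt hh.le
    have hinner : HasDerivAt (fun t => 1 - c ^ 2 * Real.cos t ^ 2)
        (-(c ^ 2 * (2 * Real.cos t ^ 1 * -Real.sin t))) t := by
      exact (((Real.hasDerivAt_cos t).pow 2).const_mul (c ^ 2)).const_sub 1
    have hden : HasDerivAt (fun t => Real.sqrt (1 - c ^ 2 * Real.cos t ^ 2))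
        (1 / (2 * s) * (-(c ^ 2 * (2 * Real.cos t ^ 1 * -Real.sin t)))) t :=
      (Real.hasDerivAt_sqrt hh.ne').comp t hinner
    have hnum : HasDerivAt (fun t => c * Real.sin t) (c * Real.cos t) t :=
      (Real.hasDerivAt_sin t).const_mul c
    have h := hnum.div hden hs.ne'
    have hsin : Real.sin t ^ 2 = 1 - Real.cos t ^ 2 := by
      nlinarith [Real.sin_sq_add_cos_sq t]
    have hEq : (c * Real.cos t * s -
        c * Real.sin t * (1 / (2 * s) * (-(c ^ 2 * (2 * Real.cos t ^ 1 * -Real.sin t))))) / s ^ 2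
        = F t := by
      show _ = -(c * Real.cos t * (c ^ 2 - 1)) / s ^ 3
      field_simp
      linear_combination hs2 -
        (c ^ 2) * hsin
    rw [hEq] at h
    exact h
  have hFle : ∀ t ∈ Set.Ioo a (Real.pi / 2), F t ≤ 0 := by
    intro t ht
    obtain ⟨h1, h2⟩ := hmem t ht
    have hs : 0 < Real.sqrt (1 - c ^ 2 * Real.cos t ^ 2) := Real.sqrt_pos.mpr (hpos t ht)
    rw [hFdef]
    apply div_nonpos_of_nonpos_of_nonneg
    · have : 0 ≤ c * Real.cos t * (c ^ 2 - 1) := by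
        apply mul_nonneg (by positivity) (by nlinarith)
      linarith
    · positivity
  -- antitonicity of g on the open interval
  have hganti : AntitoneOn g (Set.Ioo a (Real.pi / 2)) := by
    apply antitoneOn_of_deriv_nonpos (convex_Ioo _ _)
    · exact fun t ht => (hd2 t ht).differentiableAt.continuousAt.continuousWithinAt
    · rw [interior_Ioo]
      exact fun t ht => (hd2 t ht).differentiableAt.differentiableWithinAt
    · rw [interior_Ioo]
      intro t ht
      rw [(hd2 t ht).deriv]
      exact hFle t ht
  have hderiv_eq : ∀ t ∈ Set.Ioo a (Real.pi / 2), deriv f t = g t :=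
    fun t ht => (hd1 t ht).deriv
  constructor
  · apply AntitoneOn.concaveOn_of_deriv (convex_Icc _ _)
    · exact (Real.continuous_arccos.comp (continuous_const.mul Real.continuous_cos)).continuousOn
    · rw [interior_Icc]
      exact fun t ht => (hd1 t ht).differentiableAt.differentiableWithinAt
    · rw [interior_Icc]
      intro x hx y hy hxy
      rw [hderiv_eq x hx, hderiv_eq y hy]
      exact hganti hx hy hxy
  · intro t ht
    have heq : deriv f =ᶠ[nhds t] g :=
      Filter.eventuallyEq_of_mem (isOpen_Ioo.mem_nhds ht) hderiv_eq
    have h2 : deriv (deriv f) t = F t := by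
      rw [heq.deriv_eq, (hd2 t ht).deriv]
    exact ⟨h2, h2 ▸ hFle t ht⟩
end
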